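/- arXiv:0802.0195 — 3 statements merged into one kernel-verified Lean document; each statement's English description precedes it below -/
import Mathlib

section
/- For every n ≥ 1 and each index i, the DWBC partition function of the elliptic SOS model, viewed as a function of the single variable u_i (all other variables fixed), is an entire function satisfying Z_n|_{u_i → u_i+1} = (−1)^n Z_n and Z_n|_{u_i → u_i+τ} = (−1)^n e^{2πi(λ + Σ_{j=1}^n v_j)} e^{−2πin u_i − πin τ} Z_n; that is, it is an elliptic polynomial of degree n with character χ given by χ(1) = (−1)^n and χ(τ) = (−1)^n exp(2πi(λ + Σ_{j=1}^n v_j)). -/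
open Complex BigOperators

noncomputable section

/-- The lattice Γ = ℤ + τℤ. -/
def latticeGamma (τ : ℂ) : Set ℂ := {x : ℂ | ∃ a b : ℤ, x = (a : ℂ) + (b : ℂ) * τ}

/-- Boltzmann weight of the SOS model.  Heights are recorded as integer offsets:
the actual height is `λ/hbar + offset`, so `hbar·(height) = lam + offset·hbar`.
The arguments after the spectral parameter `x = u_i - v_j` are the offsets of
`d_{i,j-1}, d_{i-1,j-1}, d_{i-1,j}, d_{ij}`. -/
def sosWeight (θ : ℂ → ℂ) (hbar lam : ℂ) (x : ℂ) (a b c d : ℤ) : ℂ :=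
  if a = d + 1 ∧ b = d + 2 ∧ c = d + 1 then θ (x + hbar)
  else if a = d - 1 ∧ b = d - 2 ∧ c = d - 1 then θ (x + hbar)
  else if a = d - 1 ∧ b = d ∧ c = d + 1 then
    θ x * θ (lam + (d : ℂ) * hbar + hbar) / θ (lam + (d : ℂ) * hbar)
  else if a = d + 1 ∧ b = d ∧ c = d - 1 then
    θ x * θ (lam + (d : ℂ) * hbar - hbar) / θ (lam + (d : ℂ) * hbar)
  else if a = d - 1 ∧ b = d ∧ c = d - 1 then
    θ (x + lam + (d : ℂ) * hbar) * θ hbar / θ (lam + (d : ℂ) * hbar)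
  else if a = d + 1 ∧ b = d ∧ c = d + 1 then
    θ (x - lam - (d : ℂ) * hbar) * θ hbar / θ (-(lam + (d : ℂ) * hbar))
  else 0

/-- Height configurations (integer offsets; the actual height of face `(i,j)` is
`λ/hbar + d i j`) on the `(n+1)×(n+1)` array of faces: adjacent heights differ by `±1`,
the corner height `d_{nn}` is fixed, and the domain-wall boundary conditions
`α_{in} = +1`, `β_{1j} = -1`, `γ_{i1} = -1`, `δ_{nj} = +1` hold. -/
def IsSOSConfig (n : ℕ) (d : Fin (n + 1) → Fin (n + 1) → ℤ) : Prop :=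
  d (Fin.last n) (Fin.last n) = 0 ∧
  (∀ (i : Fin n) (j : Fin (n + 1)),
      d i.succ j - d i.castSucc j = 1 ∨ d i.succ j - d i.castSucc j = -1) ∧
  (∀ (i : Fin (n + 1)) (j : Fin n),
      d i j.succ - d i j.castSucc = 1 ∨ d i j.succ - d i j.castSucc = -1) ∧
  (∀ i : Fin n, d i.castSucc (Fin.last n) - d i.succ (Fin.last n) = 1) ∧
  (∀ j : Fin n, d 0 j.castSucc - d 0 j.succ = -1) ∧
  (∀ i : Fin n, d i.castSucc 0 - d i.succ 0 = -1) ∧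
  (∀ j : Fin n, d (Fin.last n) j.castSucc - d (Fin.last n) j.succ = 1)

/-- The DWBC partition function `Z_n(u_n,…,u_1; v_n,…,v_1; λ)` of the elliptic SOS
model: the sum over all DWBC height configurations of the product of the Boltzmann
weights of the `n×n` vertices.  Here `u i`, `v j` denote `u_{i+1}`, `v_{j+1}`. -/
def sosZ (θ : ℂ → ℂ) (hbar lam : ℂ) (n : ℕ) (u v : Fin n → ℂ) : ℂ :=
  ∑ᶠ d ∈ {d : Fin (n + 1) → Fin (n + 1) → ℤ | IsSOSConfig n d},
    ∏ i : Fin n, ∏ j : Fin n,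
      sosWeight θ hbar lam (u i - v j)
        (d i.succ j.castSucc) (d i.castSucc j.castSucc)
        (d i.castSucc j.succ) (d i.succ j.succ)

/-! ### Auxiliary machinery -/

/-- Column potential: the shift of the `θ`-argument of each Boltzmann weight is the
difference of this potential across the vertex, plus `ħ/2`. -/
def sosP (hbar lam : ℂ) (t b : ℤ) : ℂ :=
  if t = b + 1 then -(b : ℂ) * hbar / 2 else lam + (b : ℂ) * hbar / 2

lemma fin_step (n : ℕ) (f : Fin (n+1) → ℤ) (e : ℤ)
    (h : ∀ i : Fin n, f i.succ = f i.castSucc + e) (k : Fin (n+1)) :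
    f k = f 0 + e * (k.val : ℤ) := by
  induction k using Fin.induction with
  | zero => simp
  | succ i ih => rw [h i, ih]; simp only [Fin.val_succ, Fin.coe_castSucc]; push_cast; ring

lemma fin_diff_bound {n : ℕ} (f : Fin (n+1) → ℤ)
    (h : ∀ i : Fin n, f i.succ - f i.castSucc = 1 ∨ f i.succ - f i.castSucc = -1)
    (k : Fin (n+1)) : f k - f 0 ≤ (k.val : ℤ) ∧ f 0 - f k ≤ (k.val : ℤ) := by
  induction k using Fin.induction with
  | zero => simp
  | succ i ih =>
    have h2 := h i
    simp only [Fin.val_succ, Fin.coe_castSucc] at *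
    push_cast at *
    omega

lemma fin_telescope {n : ℕ} (g : Fin (n+1) → ℂ) :
    ∑ j : Fin n, (g j.succ - g j.castSucc) = g (Fin.last n) - g 0 := by
  have h1 := Fin.sum_univ_succ g
  have h2 := Fin.sum_univ_castSucc g
  rw [Finset.sum_sub_distrib]
  linear_combination h2 - h1

lemma sos_boundary {n : ℕ} {d : Fin (n+1) → Fin (n+1) → ℤ} (h : IsSOSConfig n d) :
    (∀ k : Fin (n+1), d k 0 = (k.val : ℤ)) ∧
    (∀ j : Fin (n+1), d 0 j = (j.val : ℤ)) ∧
    (∀ k : Fin (n+1), d k (Fin.last n) = (n : ℤ) - (k.val : ℤ)) := by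
  obtain ⟨hc, _, _, hα, hβ, hγ, hδ⟩ := h
  have h1 : ∀ k : Fin (n+1), d k 0 = d 0 0 + 1 * (k.val : ℤ) :=
    fin_step n (fun k => d k 0) 1 (fun i => show d i.succ 0 = d i.castSucc 0 + 1 by
      have := hγ i; omega)
  have h2 : ∀ j : Fin (n+1), d (Fin.last n) j = d (Fin.last n) 0 + (-1) * (j.val : ℤ) :=
    fin_step n (fun j => d (Fin.last n) j) (-1)
      (fun j => show d (Fin.last n) j.succ = d (Fin.last n) j.castSucc + (-1) by
        have := hδ j; omega)
  have h3 : ∀ j : Fin (n+1), d 0 j = d 0 0 + 1 * (j.val : ℤ) :=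
    fin_step n (fun j => d 0 j) 1 (fun j => show d 0 j.succ = d 0 j.castSucc + 1 by
      have := hβ j; omega)
  have h4 : ∀ k : Fin (n+1), d k (Fin.last n) = d 0 (Fin.last n) + (-1) * (k.val : ℤ) :=
    fin_step n (fun k => d k (Fin.last n)) (-1)
      (fun i => show d i.succ (Fin.last n) = d i.castSucc (Fin.last n) + (-1) by
        have := hα i; omega)
  have hl : (Fin.last n).val = n := Fin.val_last n
  have e1 : d (Fin.last n) 0 = (n : ℤ) := by have := h2 (Fin.last n); rw [hl] at this; omega
  have e0 : d 0 0 = 0 := by have := h1 (Fin.last n); rw [hl] at this; omega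
  refine ⟨fun k => by have := h1 k; omega, fun j => by have := h3 j; omega, fun k => ?_⟩
  have e2 : d 0 (Fin.last n) = (n : ℤ) := by have := h3 (Fin.last n); rw [hl] at this; omega
  have := h4 k; omega

lemma sos_config_finite (n : ℕ) :
    {d : Fin (n+1) → Fin (n+1) → ℤ | IsSOSConfig n d}.Finite := by
  have hsub : {d : Fin (n+1) → Fin (n+1) → ℤ | IsSOSConfig n d} ⊆
      Set.pi Set.univ (fun _ : Fin (n+1) => Set.pi Set.univ
        (fun _ : Fin (n+1) => Set.Icc (-(n:ℤ) - (n:ℤ)) ((n:ℤ) + (n:ℤ)))) := by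
    intro d hd
    simp only [Set.mem_pi, Set.mem_univ, forall_true_left, Set.mem_Icc]
    intro i j
    have hb := (sos_boundary hd).1 i
    have hr := fin_diff_bound (f := d i) (hd.2.2.1 i) j
    have hi : (i.val : ℤ) ≤ (n : ℤ) := by exact_mod_cast Int.ofNat_le.mpr (Fin.is_le i)
    have hj : (j.val : ℤ) ≤ (n : ℤ) := by exact_mod_cast Int.ofNat_le.mpr (Fin.is_le j)
    have hi0 : (0:ℤ) ≤ (i.val : ℤ) := Int.ofNat_nonneg _
    omega
  exact (Set.Finite.pi fun _ => Set.Finite.pi fun _ => Set.finite_Icc _ _).subset hsub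

lemma sosWeight_differentiable (θ : ℂ → ℂ) (hθdiff : Differentiable ℂ θ)
    (hbar lam : ℂ) (a b c d : ℤ) :
    Differentiable ℂ (fun y : ℂ => sosWeight θ hbar lam y a b c d) := by
  unfold sosWeight
  split_ifs <;> fun_prop

lemma sosWeight_add_one (θ : ℂ → ℂ) (hθ1 : ∀ x : ℂ, θ (x + 1) = -θ x)
    (hbar lam x : ℂ) (a b c d : ℤ) :
    sosWeight θ hbar lam (x + 1) a b c d = -sosWeight θ hbar lam x a b c d := by
  unfold sosWeight
  split_ifs
  · rw [show x + 1 + hbar = (x + hbar) + 1 by ring, hθ1]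
  · rw [show x + 1 + hbar = (x + hbar) + 1 by ring, hθ1]
  · rw [hθ1]; ring
  · rw [hθ1]; ring
  · rw [show x + 1 + lam + (d:ℂ) * hbar = (x + lam + (d:ℂ) * hbar) + 1 by ring, hθ1]; ring
  · rw [show x + 1 - lam - (d:ℂ) * hbar = (x - lam - (d:ℂ) * hbar) + 1 by ring, hθ1]; ring
  · simp

lemma sosWeight_add_tau (τ : ℂ) (θ : ℂ → ℂ)
    (hθτ : ∀ x : ℂ, θ (x + τ) =
      -Complex.exp (-(2 * (Real.pi : ℂ) * Complex.I * x) - (Real.pi : ℂ) * Complex.I * τ) * θ x)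
    (hbar lam x : ℂ) (a b c d : ℤ) :
    sosWeight θ hbar lam (x + τ) a b c d =
      -Complex.exp (-(2 * (Real.pi : ℂ) * Complex.I *
          (x + sosP hbar lam c d - sosP hbar lam b a + hbar / 2)) -
        (Real.pi : ℂ) * Complex.I * τ) * sosWeight θ hbar lam x a b c d := by
  unfold sosWeight
  split_ifs with h1 h2 h3 h4 h5 h6
  · have hs : x + sosP hbar lam c d - sosP hbar lam b a + hbar/2 = x + hbar := by
      rw [h1.1, h1.2.1, h1.2.2]; unfold sosP
      rw [if_pos rfl, if_pos (by omega)]; push_cast; ring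
    rw [hs, show x + τ + hbar = (x + hbar) + τ by ring, hθτ]
  · have hs : x + sosP hbar lam c d - sosP hbar lam b a + hbar/2 = x + hbar := by
      rw [h2.1, h2.2.1, h2.2.2]; unfold sosP
      rw [if_neg (by omega), if_neg (by omega)]; push_cast; ring
    rw [hs, show x + τ + hbar = (x + hbar) + τ by ring, hθτ]
  · have hs : x + sosP hbar lam c d - sosP hbar lam b a + hbar/2 = x := by
      rw [h3.1, h3.2.1, h3.2.2]; unfold sosP
      rw [if_pos rfl, if_pos (by omega)]; push_cast; ring
    rw [hs, hθτ]; ring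
  · have hs : x + sosP hbar lam c d - sosP hbar lam b a + hbar/2 = x := by
      rw [h4.1, h4.2.1, h4.2.2]; unfold sosP
      rw [if_neg (by omega), if_neg (by omega)]; push_cast; ring
    rw [hs, hθτ]; ring
  · have hs : x + sosP hbar lam c d - sosP hbar lam b a + hbar/2
        = x + lam + (d:ℂ) * hbar := by
      rw [h5.1, h5.2.1, h5.2.2]; unfold sosP
      rw [if_neg (by omega), if_pos (by omega)]; push_cast; ring
    rw [hs, show x + τ + lam + (d:ℂ) * hbar = (x + lam + (d:ℂ) * hbar) + τ by ring, hθτ]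
    ring
  · have hs : x + sosP hbar lam c d - sosP hbar lam b a + hbar/2
        = x - lam - (d:ℂ) * hbar := by
      rw [h6.1, h6.2.1, h6.2.2]; unfold sosP
      rw [if_pos rfl, if_neg (by omega)]; push_cast; ring
    rw [hs, show x + τ - lam - (d:ℂ) * hbar = (x - lam - (d:ℂ) * hbar) + τ by ring, hθτ]
    ring
  · simp

lemma sos_row_tau (τ : ℂ) (θ : ℂ → ℂ)
    (hθτ : ∀ x : ℂ, θ (x + τ) =
      -Complex.exp (-(2 * (Real.pi : ℂ) * Complex.I * x) - (Real.pi : ℂ) * Complex.I * τ) * θ x)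
    (hbar lam : ℂ) {n : ℕ} {d : Fin (n+1) → Fin (n+1) → ℤ} (hd : IsSOSConfig n d)
    (i : Fin n) (x : ℂ) (v : Fin n → ℂ) :
    (∏ j : Fin n, sosWeight θ hbar lam (x + τ - v j)
        (d i.succ j.castSucc) (d i.castSucc j.castSucc)
        (d i.castSucc j.succ) (d i.succ j.succ)) =
    (-1 : ℂ) ^ n * Complex.exp (2 * (Real.pi : ℂ) * Complex.I * (lam + ∑ j, v j)) *
      Complex.exp (-(2 * (Real.pi : ℂ) * Complex.I * (n : ℂ) * x) -
        (Real.pi : ℂ) * Complex.I * (n : ℂ) * τ) *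
      ∏ j : Fin n, sosWeight θ hbar lam (x - v j)
        (d i.succ j.castSucc) (d i.castSucc j.castSucc)
        (d i.castSucc j.succ) (d i.succ j.succ) := by
  classical
  set g : Fin (n+1) → ℂ := fun j => sosP hbar lam (d i.castSucc j) (d i.succ j) with hg
  have hW : ∀ j ∈ Finset.univ, sosWeight θ hbar lam (x + τ - v j)
        (d i.succ j.castSucc) (d i.castSucc j.castSucc)
        (d i.castSucc j.succ) (d i.succ j.succ)
      = (-1 : ℂ) * Complex.exp (-(2 * (Real.pi : ℂ) * Complex.I *
          ((x - v j) + g j.succ - g j.castSucc + hbar / 2)) -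
          (Real.pi : ℂ) * Complex.I * τ) *
        sosWeight θ hbar lam (x - v j)
          (d i.succ j.castSucc) (d i.castSucc j.castSucc)
          (d i.castSucc j.succ) (d i.succ j.succ) := by
    intro j _
    rw [show x + τ - v j = (x - v j) + τ by ring,
      sosWeight_add_tau τ θ hθτ hbar lam (x - v j) _ _ _ _]
    simp only [hg]
    ring
  rw [Finset.prod_congr rfl hW, Finset.prod_mul_distrib, Finset.prod_mul_distrib,
    Finset.prod_const, ← Complex.exp_sum, Finset.card_univ, Fintype.card_fin]
  have hbd := sos_boundary hd
  have htel := fin_telescope g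
  have hgl : g (Fin.last n) = -((n:ℂ) - (i.val : ℂ) - 1) * hbar / 2 := by
    simp only [hg]
    rw [hbd.2.2 i.castSucc, hbd.2.2 i.succ]
    unfold sosP
    rw [if_pos (by simp only [Fin.val_succ, Fin.coe_castSucc]; push_cast; ring)]
    push_cast [Fin.val_succ]
    ring
  have hg0 : g 0 = lam + ((i.val : ℂ) + 1) * hbar / 2 := by
    simp only [hg]
    rw [hbd.1 i.castSucc, hbd.1 i.succ]
    unfold sosP
    rw [if_neg (by simp only [Fin.val_succ, Fin.coe_castSucc]; omega)]
    push_cast [Fin.val_succ]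
    ring
  have hsum : (∑ j : Fin n, (-(2 * (Real.pi : ℂ) * Complex.I *
        ((x - v j) + g j.succ - g j.castSucc + hbar / 2)) -
        (Real.pi : ℂ) * Complex.I * τ))
      = 2 * (Real.pi : ℂ) * Complex.I * (lam + ∑ j, v j) +
        (-(2 * (Real.pi : ℂ) * Complex.I * (n : ℂ) * x) -
          (Real.pi : ℂ) * Complex.I * (n : ℂ) * τ) := by
    have expand : ∀ j ∈ Finset.univ, (-(2 * (Real.pi : ℂ) * Complex.I *
          ((x - v j) + g j.succ - g j.castSucc + hbar / 2)) -
          (Real.pi : ℂ) * Complex.I * τ)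
        = (-(2 * (Real.pi : ℂ) * Complex.I * (x + hbar / 2)) - (Real.pi : ℂ) * Complex.I * τ)
          + (2 * (Real.pi : ℂ) * Complex.I) * v j
          + (-(2 * (Real.pi : ℂ) * Complex.I)) * (g j.succ - g j.castSucc) :=
      fun j _ => by ring
    rw [Finset.sum_congr rfl expand, Finset.sum_add_distrib, Finset.sum_add_distrib,
      Finset.sum_const, ← Finset.mul_sum, ← Finset.mul_sum, htel, hgl, hg0,
      Finset.card_univ, Fintype.card_fin, nsmul_eq_mul]
    ring
  rw [hsum, Complex.exp_add]
  ring

lemma sosZ_eq_sum (θ : ℂ → ℂ) (hbar lam : ℂ) (n : ℕ) (u v : Fin n → ℂ) :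
    sosZ θ hbar lam n u v = ∑ d ∈ (sos_config_finite n).toFinset,
      ∏ i : Fin n, ∏ j : Fin n,
        sosWeight θ hbar lam (u i - v j)
          (d i.succ j.castSucc) (d i.castSucc j.castSucc)
          (d i.castSucc j.succ) (d i.succ j.succ) :=
  finsum_mem_eq_finite_toFinset_sum _ (sos_config_finite n)

/-- as a function of each single variable `u_i`, the DWBC partition
function of the elliptic SOS model is an elliptic polynomial of degree `n` with
character `χ(1) = (-1)^n`, `χ(τ) = (-1)^n e^{2πi(λ + Σ_j v_j)}`. -/
theorem sosZ_elliptic_polynomial_in_u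
    (τ : ℂ) (hτ : 0 < τ.im)
    (θ : ℂ → ℂ) (hθdiff : Differentiable ℂ θ)
    (hθ1 : ∀ x : ℂ, θ (x + 1) = -θ x)
    (hθτ : ∀ x : ℂ, θ (x + τ) =
      -Complex.exp (-(2 * (Real.pi : ℂ) * Complex.I * x) - (Real.pi : ℂ) * Complex.I * τ) * θ x)
    (hθ0 : deriv θ 0 = 1)
    (hθzero : ∀ x : ℂ, θ x = 0 ↔ x ∈ latticeGamma τ)
    (hθsimple : ∀ x ∈ latticeGamma τ, deriv θ x ≠ 0)
    (hbar lam : ℂ) (hbar_nl : hbar ∉ latticeGamma τ)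
    (hlam : ∀ k : ℤ, lam + (k : ℂ) * hbar ∉ latticeGamma τ)
    (n : ℕ) (hn : 1 ≤ n) (i : Fin n) (u v : Fin n → ℂ) :
    Differentiable ℂ (fun x : ℂ => sosZ θ hbar lam n (Function.update u i x) v) ∧
    (∀ x : ℂ, sosZ θ hbar lam n (Function.update u i (x + 1)) v =
      (-1 : ℂ) ^ n * sosZ θ hbar lam n (Function.update u i x) v) ∧
    (∀ x : ℂ, sosZ θ hbar lam n (Function.update u i (x + τ)) v =
      (-1 : ℂ) ^ n * Complex.exp (2 * (Real.pi : ℂ) * Complex.I * (lam + ∑ j, v j)) *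
        Complex.exp (-(2 * (Real.pi : ℂ) * Complex.I * (n : ℂ) * x) -
          (Real.pi : ℂ) * Complex.I * (n : ℂ) * τ) *
        sosZ θ hbar lam n (Function.update u i x) v) := by
  classical
  refine ⟨?_, ?_, ?_⟩
  · have heq : (fun x : ℂ => sosZ θ hbar lam n (Function.update u i x) v)
        = fun x : ℂ => ∑ d ∈ (sos_config_finite n).toFinset,
          ∏ i' : Fin n, ∏ j : Fin n,
            sosWeight θ hbar lam (Function.update u i x i' - v j)
              (d i'.succ j.castSucc) (d i'.castSucc j.castSucc)
              (d i'.castSucc j.succ) (d i'.succ j.succ) :=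
      funext fun x => sosZ_eq_sum θ hbar lam n (Function.update u i x) v
    rw [heq]
    apply Differentiable.fun_sum
    intro d _
    apply Differentiable.fun_finsetProd
    intro i' _
    apply Differentiable.fun_finsetProd
    intro j _
    by_cases h : i' = i
    · subst h
      simp only [Function.update_self]
      exact (sosWeight_differentiable θ hθdiff hbar lam _ _ _ _).comp
        (differentiable_id.sub_const _)
    · simp only [Function.update_of_ne h]
      exact differentiable_const _
  · intro x
    rw [sosZ_eq_sum, sosZ_eq_sum, Finset.mul_sum]
    apply Finset.sum_congr rfl
    intro d _
    have hrow : ∀ i' ∈ (Finset.univ : Finset (Fin n)),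
        (∏ j : Fin n, sosWeight θ hbar lam (Function.update u i (x + 1) i' - v j)
          (d i'.succ j.castSucc) (d i'.castSucc j.castSucc)
          (d i'.castSucc j.succ) (d i'.succ j.succ))
        = (if i' = i then (-1 : ℂ) ^ n else 1) *
          ∏ j : Fin n, sosWeight θ hbar lam (Function.update u i x i' - v j)
            (d i'.succ j.castSucc) (d i'.castSucc j.castSucc)
            (d i'.castSucc j.succ) (d i'.succ j.succ) := by
      intro i' _
      by_cases h : i' = i
      · subst h
        simp only [Function.update_self, if_pos rfl]
        have hj : ∀ j ∈ (Finset.univ : Finset (Fin n)),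
            sosWeight θ hbar lam (x + 1 - v j)
              (d i'.succ j.castSucc) (d i'.castSucc j.castSucc)
              (d i'.castSucc j.succ) (d i'.succ j.succ)
            = (-1 : ℂ) * sosWeight θ hbar lam (x - v j)
              (d i'.succ j.castSucc) (d i'.castSucc j.castSucc)
              (d i'.castSucc j.succ) (d i'.succ j.succ) := by
          intro j _
          rw [show x + 1 - v j = (x - v j) + 1 by ring,
            sosWeight_add_one θ hθ1 hbar lam (x - v j) _ _ _ _]
          ring
        rw [Finset.prod_congr rfl hj, Finset.prod_mul_distrib, Finset.prod_const,
          Finset.card_univ, Fintype.card_fin]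
        simp
      · simp only [Function.update_of_ne h, if_neg h, one_mul]
    rw [Finset.prod_congr rfl hrow, Finset.prod_mul_distrib, Finset.prod_ite_eq',
      if_pos (Finset.mem_univ i)]
  · intro x
    rw [sosZ_eq_sum, sosZ_eq_sum, Finset.mul_sum]
    apply Finset.sum_congr rfl
    intro d hd
    have hd' : IsSOSConfig n d := by
      have := (Set.Finite.mem_toFinset _).mp hd
      exact this
    set C : ℂ := (-1 : ℂ) ^ n * Complex.exp (2 * (Real.pi : ℂ) * Complex.I * (lam + ∑ j, v j)) *
        Complex.exp (-(2 * (Real.pi : ℂ) * Complex.I * (n : ℂ) * x) -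
          (Real.pi : ℂ) * Complex.I * (n : ℂ) * τ) with hC
    have hrow : ∀ i' ∈ (Finset.univ : Finset (Fin n)),
        (∏ j : Fin n, sosWeight θ hbar lam (Function.update u i (x + τ) i' - v j)
          (d i'.succ j.castSucc) (d i'.castSucc j.castSucc)
          (d i'.castSucc j.succ) (d i'.succ j.succ))
        = (if i' = i then C else 1) *
          ∏ j : Fin n, sosWeight θ hbar lam (Function.update u i x i' - v j)
            (d i'.succ j.castSucc) (d i'.castSucc j.castSucc)
            (d i'.castSucc j.succ) (d i'.succ j.succ) := by
      intro i' _
      by_cases h : i' = i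
      · subst h
        simp only [Function.update_self, eq_self_iff_true, if_true, hC]
        exact sos_row_tau τ θ hθτ hbar lam hd' i' x v
      · simp only [Function.update_of_ne h, if_neg h, one_mul]
    rw [Finset.prod_congr rfl hrow, Finset.prod_mul_distrib, Finset.prod_ite_eq',
      if_pos (Finset.mem_univ i)]

end
end

section
/- For every n ≥ 1 and each index j, the DWBC partition function of the elliptic SOS model, viewed as a function of the single variable v_j (all other variables fixed), is an entire function satisfying Z_n|_{v_j → v_j+1} = (−1)^n Z_n and Z_n|_{v_j → v_j+τ} = (−1)^n e^{2πi(−λ + Σ_{i=1}^n u_i)} e^{−2πin v_j − πin τ} Z_n; that is, it is an elliptic polynomial of degree n with character χ̃ given by χ̃(1) = (−1)^n and χ̃(τ) = (−1)^n exp(2πi(−λ + Σ_{i=1}^n u_i)). -/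
open Complex BigOperators

noncomputable section

set_option maxHeartbeats 1000000

private lemma fin_telescope_s3 {M : Type*} [AddCommGroup M] :
    ∀ {n : ℕ} (G : Fin (n + 1) → M),
      ∑ i : Fin n, (G i.castSucc - G i.succ) = G 0 - G (Fin.last n)
  | 0, G => by simp [Fin.last]
  | n + 1, G => by
    rw [Fin.sum_univ_castSucc]
    have := fin_telescope_s3 (fun i : Fin (n + 1) => G i.castSucc)
    simp only [← Fin.succ_castSucc] at this ⊢
    rw [this]
    simp [Fin.succ_last]

private lemma fin_ap {n : ℕ} (g : Fin (n + 1) → ℤ) (c : ℤ)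
    (h : ∀ j : Fin n, g j.succ - g j.castSucc = c) :
    ∀ k : Fin (n + 1), g k = g 0 + c * (k : ℕ) := by
  intro k
  induction k using Fin.induction with
  | zero => simp
  | succ i ih =>
    have h1 := h i
    have : g i.succ = g i.castSucc + c := by omega
    rw [this, ih]
    simp only [Fin.val_succ, Fin.coe_castSucc]
    push_cast
    ring

private lemma fin_bound {n : ℕ} (g : Fin (n + 1) → ℤ)
    (h : ∀ j : Fin n, g j.succ - g j.castSucc = 1 ∨ g j.succ - g j.castSucc = -1)
    (k : Fin (n + 1)) : |g k - g (Fin.last n)| ≤ (n : ℤ) := by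
  suffices H : ∀ m : ℕ, ∀ k : Fin (n + 1), (k : ℕ) + m = n → |g k - g (Fin.last n)| ≤ (m : ℤ) by
    have hk := k.isLt
    have := H (n - (k : ℕ)) k (by omega)
    have hle : ((n - (k : ℕ) : ℕ) : ℤ) ≤ (n : ℤ) := by omega
    linarith
  intro m
  induction m with
  | zero =>
    intro k hk
    have : k = Fin.last n := Fin.ext (by simpa using hk)
    rw [this]
    simp
  | succ m ih =>
    intro k hk
    have hkn : (k : ℕ) < n := by omega
    have hcs : (⟨(k : ℕ), hkn⟩ : Fin n).castSucc = k := Fin.ext rfl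
    have h1 := h ⟨(k : ℕ), hkn⟩
    have h2 := ih (⟨(k : ℕ), hkn⟩ : Fin n).succ (by simp [Fin.val_succ]; omega)
    have e1 : |g (⟨(k : ℕ), hkn⟩ : Fin n).castSucc - g (⟨(k : ℕ), hkn⟩ : Fin n).succ| ≤ 1 := by
      rw [abs_le]; omega
    have tri := abs_sub_le (g (⟨(k : ℕ), hkn⟩ : Fin n).castSucc)
      (g (⟨(k : ℕ), hkn⟩ : Fin n).succ) (g (Fin.last n))
    rw [← hcs]
    push_cast
    linarith

/-- The per-vertex phase in the τ-quasiperiodicity. -/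
private def Cval (hbar lam : ℂ) (a b c d : ℤ) : ℂ :=
  (((b - c : ℤ) : ℂ) * (lam + hbar * ((b + c : ℤ) : ℂ) / 2) -
    ((a - d : ℤ) : ℂ) * (lam + hbar * ((a + d : ℤ) : ℂ) / 2)) / 2 + hbar / 2

private lemma weight_shift_one (θ : ℂ → ℂ) (hθ1 : ∀ y : ℂ, θ (y + 1) = -θ y)
    (hbar lam x : ℂ) (a b c d : ℤ) :
    sosWeight θ hbar lam (x - 1) a b c d = -sosWeight θ hbar lam x a b c d := by
  have hs : ∀ y : ℂ, θ (y - 1) = -θ y := by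
    intro y
    have := hθ1 (y - 1)
    rw [sub_add_cancel] at this
    rw [this, neg_neg]
  unfold sosWeight
  split_ifs
  · rw [show x - 1 + hbar = x + hbar - 1 by ring, hs]
  · rw [show x - 1 + hbar = x + hbar - 1 by ring, hs]
  · rw [hs x]; ring
  · rw [hs x]; ring
  · rw [show x - 1 + lam + (d : ℂ) * hbar = x + lam + (d : ℂ) * hbar - 1 by ring, hs]; ring
  · rw [show x - 1 - lam - (d : ℂ) * hbar = x - lam - (d : ℂ) * hbar - 1 by ring, hs]; ring
  · simp

private lemma weight_shift_tau (τ : ℂ) (θ : ℂ → ℂ)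
    (hs : ∀ y : ℂ, θ (y - τ) =
      -Complex.exp (2 * (Real.pi : ℂ) * Complex.I * y - (Real.pi : ℂ) * Complex.I * τ) * θ y)
    (hbar lam x : ℂ) (a b c d : ℤ)
    (h1 : a - b = 1 ∨ a - b = -1) (h2 : d - c = 1 ∨ d - c = -1)
    (h3 : c - b = 1 ∨ c - b = -1) (h4 : d - a = 1 ∨ d - a = -1) :
    sosWeight θ hbar lam (x - τ) a b c d =
      -Complex.exp (2 * (Real.pi : ℂ) * Complex.I * (x + Cval hbar lam a b c d) -
          (Real.pi : ℂ) * Complex.I * τ) * sosWeight θ hbar lam x a b c d := by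
  rcases h1 with h1 | h1 <;> rcases h3 with h3 | h3 <;> rcases h4 with h4 | h4
  · rw [show a = d - 1 from by omega]
    rw [show b = d - 2 from by omega]
    rw [show c = d - 1 from by omega]
    unfold sosWeight
    rw [if_neg (by omega), if_pos ⟨rfl, rfl, rfl⟩, if_neg (by omega), if_pos ⟨rfl, rfl, rfl⟩]
    rw [show x - τ + hbar = (x + hbar) - τ by ring, hs]
    rw [show 2 * (Real.pi : ℂ) * Complex.I * (x + Cval hbar lam (d-1) (d-2) (d-1) d) -
        (Real.pi : ℂ) * Complex.I * τ
        = 2 * (Real.pi : ℂ) * Complex.I * (x + hbar) - (Real.pi : ℂ) * Complex.I * τ by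
      unfold Cval; push_cast; ring]
  · rw [show a = d + 1 from by omega]
    rw [show b = d from by omega]
    rw [show c = d + 1 from by omega]
    unfold sosWeight
    rw [if_neg (by omega), if_neg (by omega), if_neg (by omega), if_neg (by omega),
      if_neg (by omega), if_pos ⟨rfl, rfl, rfl⟩, if_neg (by omega), if_neg (by omega),
      if_neg (by omega), if_neg (by omega), if_neg (by omega), if_pos ⟨rfl, rfl, rfl⟩]
    rw [show x - τ - lam - (d : ℂ) * hbar = (x - lam - (d : ℂ) * hbar) - τ by ring, hs]
    rw [show 2 * (Real.pi : ℂ) * Complex.I * (x + Cval hbar lam (d+1) d (d+1) d) -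
        (Real.pi : ℂ) * Complex.I * τ
        = 2 * (Real.pi : ℂ) * Complex.I * (x - lam - (d : ℂ) * hbar) -
          (Real.pi : ℂ) * Complex.I * τ by
      unfold Cval; push_cast; ring]
    ring
  · omega
  · rw [show a = d + 1 from by omega]
    rw [show b = d from by omega]
    rw [show c = d - 1 from by omega]
    unfold sosWeight
    rw [if_neg (by omega), if_neg (by omega), if_neg (by omega), if_pos ⟨rfl, rfl, rfl⟩,
      if_neg (by omega), if_neg (by omega), if_neg (by omega), if_pos ⟨rfl, rfl, rfl⟩]
    rw [hs x]
    rw [show 2 * (Real.pi : ℂ) * Complex.I * (x + Cval hbar lam (d+1) d (d-1) d) -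
        (Real.pi : ℂ) * Complex.I * τ
        = 2 * (Real.pi : ℂ) * Complex.I * x - (Real.pi : ℂ) * Complex.I * τ by
      unfold Cval; push_cast; ring]
    ring
  · rw [show a = d - 1 from by omega]
    rw [show b = d from by omega]
    rw [show c = d + 1 from by omega]
    unfold sosWeight
    rw [if_neg (by omega), if_neg (by omega), if_pos ⟨rfl, rfl, rfl⟩,
      if_neg (by omega), if_neg (by omega), if_pos ⟨rfl, rfl, rfl⟩]
    rw [hs x]
    rw [show 2 * (Real.pi : ℂ) * Complex.I * (x + Cval hbar lam (d-1) d (d+1) d) -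
        (Real.pi : ℂ) * Complex.I * τ
        = 2 * (Real.pi : ℂ) * Complex.I * x - (Real.pi : ℂ) * Complex.I * τ by
      unfold Cval; push_cast; ring]
    ring
  · omega
  · rw [show a = d - 1 from by omega]
    rw [show b = d from by omega]
    rw [show c = d - 1 from by omega]
    unfold sosWeight
    rw [if_neg (by omega), if_neg (by omega), if_neg (by omega), if_neg (by omega),
      if_pos ⟨rfl, rfl, rfl⟩, if_neg (by omega), if_neg (by omega), if_neg (by omega),
      if_neg (by omega), if_pos ⟨rfl, rfl, rfl⟩]
    rw [show x - τ + lam + (d : ℂ) * hbar = (x + lam + (d : ℂ) * hbar) - τ by ring, hs]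
    rw [show 2 * (Real.pi : ℂ) * Complex.I * (x + Cval hbar lam (d-1) d (d-1) d) -
        (Real.pi : ℂ) * Complex.I * τ
        = 2 * (Real.pi : ℂ) * Complex.I * (x + lam + (d : ℂ) * hbar) -
          (Real.pi : ℂ) * Complex.I * τ by
      unfold Cval; push_cast; ring]
    ring
  · rw [show a = d + 1 from by omega]
    rw [show b = d + 2 from by omega]
    rw [show c = d + 1 from by omega]
    unfold sosWeight
    rw [if_pos ⟨rfl, rfl, rfl⟩, if_pos ⟨rfl, rfl, rfl⟩]
    rw [show x - τ + hbar = (x + hbar) - τ by ring, hs]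
    rw [show 2 * (Real.pi : ℂ) * Complex.I * (x + Cval hbar lam (d+1) (d+2) (d+1) d) -
        (Real.pi : ℂ) * Complex.I * τ
        = 2 * (Real.pi : ℂ) * Complex.I * (x + hbar) - (Real.pi : ℂ) * Complex.I * τ by
      unfold Cval; push_cast; ring]

/-- as a function of each single variable `v_j`, the DWBC partition
function of the elliptic SOS model is an elliptic polynomial of degree `n` with
character `χ̃(1) = (-1)^n`, `χ̃(τ) = (-1)^n e^{2πi(-λ + Σ_i u_i)}`. -/
theorem sosZ_elliptic_polynomial_in_v
    (τ : ℂ) (hτ : 0 < τ.im)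
    (θ : ℂ → ℂ) (hθdiff : Differentiable ℂ θ)
    (hθ1 : ∀ x : ℂ, θ (x + 1) = -θ x)
    (hθτ : ∀ x : ℂ, θ (x + τ) =
      -Complex.exp (-(2 * (Real.pi : ℂ) * Complex.I * x) - (Real.pi : ℂ) * Complex.I * τ) * θ x)
    (hθ0 : deriv θ 0 = 1)
    (hθzero : ∀ x : ℂ, θ x = 0 ↔ x ∈ latticeGamma τ)
    (hθsimple : ∀ x ∈ latticeGamma τ, deriv θ x ≠ 0)
    (hbar lam : ℂ) (hbar_nl : hbar ∉ latticeGamma τ)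
    (hlam : ∀ k : ℤ, lam + (k : ℂ) * hbar ∉ latticeGamma τ)
    (n : ℕ) (hn : 1 ≤ n) (j : Fin n) (u v : Fin n → ℂ) :
    Differentiable ℂ (fun x : ℂ => sosZ θ hbar lam n u (Function.update v j x)) ∧
    (∀ x : ℂ, sosZ θ hbar lam n u (Function.update v j (x + 1)) =
      (-1 : ℂ) ^ n * sosZ θ hbar lam n u (Function.update v j x)) ∧
    (∀ x : ℂ, sosZ θ hbar lam n u (Function.update v j (x + τ)) =
      (-1 : ℂ) ^ n * Complex.exp (2 * (Real.pi : ℂ) * Complex.I * (-lam + ∑ i, u i)) *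
        Complex.exp (-(2 * (Real.pi : ℂ) * Complex.I * (n : ℂ) * x) -
          (Real.pi : ℂ) * Complex.I * (n : ℂ) * τ) *
        sosZ θ hbar lam n u (Function.update v j x)) := by
  classical
  have hθmτ : ∀ y : ℂ, θ (y - τ) =
      -Complex.exp (2 * (Real.pi : ℂ) * Complex.I * y - (Real.pi : ℂ) * Complex.I * τ) * θ y := by
    intro y
    have h := hθτ (y - τ)
    rw [sub_add_cancel] at h
    rw [show -(2 * (Real.pi : ℂ) * Complex.I * (y - τ)) - (Real.pi : ℂ) * Complex.I * τ
        = -(2 * (Real.pi : ℂ) * Complex.I * y - (Real.pi : ℂ) * Complex.I * τ) from by ring,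
      Complex.exp_neg] at h
    rw [h]
    have hne := Complex.exp_ne_zero
      (2 * (Real.pi : ℂ) * Complex.I * y - (Real.pi : ℂ) * Complex.I * τ)
    field_simp
  -- finiteness of the configuration set
  have hSfin : {d : Fin (n + 1) → Fin (n + 1) → ℤ | IsSOSConfig n d}.Finite := by
    have hsub : {d : Fin (n + 1) → Fin (n + 1) → ℤ | IsSOSConfig n d} ⊆
        {f : Fin (n + 1) → Fin (n + 1) → ℤ |
          ∀ i, f i ∈ {g : Fin (n + 1) → ℤ | ∀ k, g k ∈ Set.Icc (-(2 * (n : ℤ))) (2 * (n : ℤ))}} := by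
      intro d hd
      obtain ⟨hc, hv, hh, -⟩ := hd
      intro i k
      have h1 := fin_bound (d i) (fun k' => hh i k') k
      have h2 := fin_bound (fun r => d r (Fin.last n)) (fun i' => hv i' (Fin.last n)) i
      rw [abs_le] at h1 h2
      simp only [Set.mem_Icc]
      omega
    exact (Set.Finite.pi' fun i => Set.Finite.pi' fun k => Set.finite_Icc _ _).subset hsub
  have hZ : ∀ w : Fin n → ℂ, sosZ θ hbar lam n u w =
      ∑ d ∈ hSfin.toFinset, ∏ i : Fin n, ∏ k : Fin n,
        sosWeight θ hbar lam (u i - w k)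
          (d i.succ k.castSucc) (d i.castSucc k.castSucc)
          (d i.castSucc k.succ) (d i.succ k.succ) := by
    intro w
    conv_lhs => rw [sosZ, ← hSfin.coe_toFinset]
    exact finsum_mem_coe_finset _ _
  refine ⟨?_, ?_, ?_⟩
  · -- differentiability
    have hrw : (fun x : ℂ => sosZ θ hbar lam n u (Function.update v j x)) =
        fun x : ℂ => ∑ d ∈ hSfin.toFinset, ∏ i : Fin n, ∏ k : Fin n,
          sosWeight θ hbar lam (u i - Function.update v j x k)
            (d i.succ k.castSucc) (d i.castSucc k.castSucc)
            (d i.castSucc k.succ) (d i.succ k.succ) := by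
      funext x; exact hZ _
    rw [hrw]
    apply Differentiable.fun_sum
    intro d _
    apply Differentiable.fun_finsetProd
    intro i _
    apply Differentiable.fun_finsetProd
    intro k _
    rcases eq_or_ne k j with rfl | hkj
    · simp only [Function.update_self]
      have haff : Differentiable ℂ (fun x : ℂ => u i - x) :=
        (differentiable_const (u i)).sub differentiable_id
      unfold sosWeight
      split_ifs
      · exact hθdiff.comp (haff.add_const hbar)
      · exact hθdiff.comp (haff.add_const hbar)
      · exact ((hθdiff.comp haff).mul_const _).div_const _
      · exact ((hθdiff.comp haff).mul_const _).div_const _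
      · exact ((hθdiff.comp ((haff.add_const lam).add_const _)).mul_const _).div_const _
      · exact ((hθdiff.comp ((haff.sub_const lam).sub_const _)).mul_const _).div_const _
      · exact differentiable_const 0
    · simp only [Function.update_of_ne hkj]
      exact differentiable_const _
  · -- shift by 1
    intro x
    rw [hZ, hZ, Finset.mul_sum]
    refine Finset.sum_congr rfl fun d _ => ?_
    rw [Finset.prod_comm]
    conv_rhs => rw [Finset.prod_comm]
    rw [← Finset.prod_erase_mul Finset.univ _ (Finset.mem_univ j)]
    conv_rhs => rw [← Finset.prod_erase_mul Finset.univ _ (Finset.mem_univ j)]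
    have he : ∀ y : ℂ, ∀ k ∈ Finset.univ.erase j, (∏ i : Fin n,
        sosWeight θ hbar lam (u i - Function.update v j y k)
          (d i.succ k.castSucc) (d i.castSucc k.castSucc)
          (d i.castSucc k.succ) (d i.succ k.succ)) = ∏ i : Fin n,
        sosWeight θ hbar lam (u i - v k)
          (d i.succ k.castSucc) (d i.castSucc k.castSucc)
          (d i.castSucc k.succ) (d i.succ k.succ) := by
      intro y k hk
      refine Finset.prod_congr rfl fun i _ => ?_
      rw [Function.update_of_ne (Finset.mem_erase.mp hk).1]
    rw [Finset.prod_congr rfl (he (x + 1)), Finset.prod_congr rfl (he x)]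
    simp only [Function.update_self]
    have hcol : (∏ i : Fin n,
        sosWeight θ hbar lam (u i - (x + 1))
          (d i.succ j.castSucc) (d i.castSucc j.castSucc)
          (d i.castSucc j.succ) (d i.succ j.succ)) = (-1 : ℂ) ^ n * ∏ i : Fin n,
        sosWeight θ hbar lam (u i - x)
          (d i.succ j.castSucc) (d i.castSucc j.castSucc)
          (d i.castSucc j.succ) (d i.succ j.succ) := by
      rw [show ((-1 : ℂ) ^ n) = ∏ _i : Fin n, (-1 : ℂ) from by
        simp [Finset.prod_const], ← Finset.prod_mul_distrib]
      refine Finset.prod_congr rfl fun i _ => ?_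
      rw [show u i - (x + 1) = (u i - x) - 1 from by ring, weight_shift_one θ hθ1]
      ring
    rw [hcol]
    ring
  · -- shift by τ
    intro x
    rw [hZ, hZ, Finset.mul_sum]
    refine Finset.sum_congr rfl fun d hd => ?_
    have hd' : IsSOSConfig n d := hSfin.mem_toFinset.mp hd
    obtain ⟨hc, hv, hh, hr, ht, hl, hb⟩ := hd'
    have htop : ∀ k : Fin (n + 1), d 0 k = d 0 0 + 1 * (k : ℕ) :=
      fin_ap (d 0) 1 (fun k => by have := ht k; omega)
    have hleft : ∀ k : Fin (n + 1), d k 0 = d 0 0 + 1 * (k : ℕ) :=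
      fin_ap (fun r => d r 0) 1 (fun i => by
        have := hl i; show d i.succ 0 - d i.castSucc 0 = 1; omega)
    have hbot : ∀ k : Fin (n + 1), d (Fin.last n) k = d (Fin.last n) 0 + (-1) * (k : ℕ) :=
      fin_ap (d (Fin.last n)) (-1) (fun k => by have := hb k; omega)
    have h00 : d 0 0 = 0 := by
      have e1 := hbot (Fin.last n)
      have e2 := hleft (Fin.last n)
      simp only [Fin.val_last] at e1 e2
      omega
    have e1 : d 0 j.castSucc = ((j : ℕ) : ℤ) := by
      have h := htop j.castSucc
      simp only [Fin.coe_castSucc] at h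
      omega
    have e2 : d 0 j.succ = ((j : ℕ) : ℤ) + 1 := by
      have h := htop j.succ
      simp only [Fin.val_succ] at h
      push_cast at h
      omega
    have e3 : d (Fin.last n) j.castSucc = (n : ℤ) - ((j : ℕ) : ℤ) := by
      have h := hbot j.castSucc
      have h2 := hleft (Fin.last n)
      simp only [Fin.coe_castSucc, Fin.val_last] at h h2
      omega
    have e4 : d (Fin.last n) j.succ = (n : ℤ) - ((j : ℕ) : ℤ) - 1 := by
      have h := hbot j.succ
      have h2 := hleft (Fin.last n)
      simp only [Fin.val_succ, Fin.val_last] at h h2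
      push_cast at h
      omega
    rw [Finset.prod_comm]
    conv_rhs => rw [Finset.prod_comm]
    rw [← Finset.prod_erase_mul Finset.univ _ (Finset.mem_univ j)]
    conv_rhs => rw [← Finset.prod_erase_mul Finset.univ _ (Finset.mem_univ j)]
    have he : ∀ y : ℂ, ∀ k ∈ Finset.univ.erase j, (∏ i : Fin n,
        sosWeight θ hbar lam (u i - Function.update v j y k)
          (d i.succ k.castSucc) (d i.castSucc k.castSucc)
          (d i.castSucc k.succ) (d i.succ k.succ)) = ∏ i : Fin n,
        sosWeight θ hbar lam (u i - v k)
          (d i.succ k.castSucc) (d i.castSucc k.castSucc)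
          (d i.castSucc k.succ) (d i.succ k.succ) := by
      intro y k hk
      refine Finset.prod_congr rfl fun i _ => ?_
      rw [Function.update_of_ne (Finset.mem_erase.mp hk).1]
    rw [Finset.prod_congr rfl (he (x + τ)), Finset.prod_congr rfl (he x)]
    simp only [Function.update_self]
    have hC : ∑ i : Fin n, Cval hbar lam
        (d i.succ j.castSucc) (d i.castSucc j.castSucc)
        (d i.castSucc j.succ) (d i.succ j.succ) = -lam := by
      have key : ∀ i : Fin n, Cval hbar lam
          (d i.succ j.castSucc) (d i.castSucc j.castSucc)
          (d i.castSucc j.succ) (d i.succ j.succ) =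
          (fun r : Fin (n + 1) =>
            ((d r j.castSucc - d r j.succ : ℤ) : ℂ) *
              (lam + hbar * ((d r j.castSucc + d r j.succ : ℤ) : ℂ) / 2) / 2 -
            hbar / 2 * ((r : ℕ) : ℂ)) i.castSucc -
          (fun r : Fin (n + 1) =>
            ((d r j.castSucc - d r j.succ : ℤ) : ℂ) *
              (lam + hbar * ((d r j.castSucc + d r j.succ : ℤ) : ℂ) / 2) / 2 -
            hbar / 2 * ((r : ℕ) : ℂ)) i.succ := by
        intro i
        simp only [Cval, Fin.coe_castSucc, Fin.val_succ]
        push_cast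
        ring
      have htel := (Finset.sum_congr rfl (fun i _ => key i)).trans
        (fin_telescope_s3 (fun r : Fin (n + 1) =>
          ((d r j.castSucc - d r j.succ : ℤ) : ℂ) *
            (lam + hbar * ((d r j.castSucc + d r j.succ : ℤ) : ℂ) / 2) / 2 -
          hbar / 2 * ((r : ℕ) : ℂ)))
      rw [htel]
      simp only [Fin.val_last, Fin.val_zero]
      rw [e1, e2, e3, e4]
      push_cast
      ring
    have hcol : (∏ i : Fin n,
        sosWeight θ hbar lam (u i - (x + τ))
          (d i.succ j.castSucc) (d i.castSucc j.castSucc)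
          (d i.castSucc j.succ) (d i.succ j.succ)) =
        ((-1 : ℂ) ^ n * Complex.exp (2 * (Real.pi : ℂ) * Complex.I * (-lam + ∑ i, u i)) *
          Complex.exp (-(2 * (Real.pi : ℂ) * Complex.I * (n : ℂ) * x) -
            (Real.pi : ℂ) * Complex.I * (n : ℂ) * τ)) * ∏ i : Fin n,
        sosWeight θ hbar lam (u i - x)
          (d i.succ j.castSucc) (d i.castSucc j.castSucc)
          (d i.castSucc j.succ) (d i.succ j.succ) := by
      have step1 : ∀ i : Fin n,
          sosWeight θ hbar lam (u i - (x + τ))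
            (d i.succ j.castSucc) (d i.castSucc j.castSucc)
            (d i.castSucc j.succ) (d i.succ j.succ) =
          (-1 : ℂ) * Complex.exp (2 * (Real.pi : ℂ) * Complex.I *
              ((u i - x) + Cval hbar lam
                (d i.succ j.castSucc) (d i.castSucc j.castSucc)
                (d i.castSucc j.succ) (d i.succ j.succ)) -
              (Real.pi : ℂ) * Complex.I * τ) *
            sosWeight θ hbar lam (u i - x)
              (d i.succ j.castSucc) (d i.castSucc j.castSucc)
              (d i.castSucc j.succ) (d i.succ j.succ) := by
        intro i
        rw [show u i - (x + τ) = (u i - x) - τ from by ring]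
        rw [weight_shift_tau τ θ hθmτ hbar lam (u i - x) _ _ _ _
          (by have := hv i j.castSucc; omega)
          (by have := hv i j.succ; omega)
          (by have := hh i.castSucc j; omega)
          (by have := hh i.succ j; omega)]
        ring
      rw [Finset.prod_congr rfl (fun i _ => step1 i), Finset.prod_mul_distrib,
        Finset.prod_mul_distrib, Finset.prod_const, ← Complex.exp_sum,
        Finset.card_univ, Fintype.card_fin]
      have hsum : (∑ i : Fin n, (2 * (Real.pi : ℂ) * Complex.I *
            ((u i - x) + Cval hbar lam
              (d i.succ j.castSucc) (d i.castSucc j.castSucc)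
              (d i.castSucc j.succ) (d i.succ j.succ)) -
            (Real.pi : ℂ) * Complex.I * τ)) =
          2 * (Real.pi : ℂ) * Complex.I * (-lam + ∑ i, u i) +
            (-(2 * (Real.pi : ℂ) * Complex.I * (n : ℂ) * x) -
              (Real.pi : ℂ) * Complex.I * (n : ℂ) * τ) := by
        have expand : ∀ i : Fin n, (2 * (Real.pi : ℂ) * Complex.I *
            ((u i - x) + Cval hbar lam
              (d i.succ j.castSucc) (d i.castSucc j.castSucc)
              (d i.castSucc j.succ) (d i.succ j.succ)) -
            (Real.pi : ℂ) * Complex.I * τ) =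
            2 * (Real.pi : ℂ) * Complex.I * u i +
            2 * (Real.pi : ℂ) * Complex.I * Cval hbar lam
              (d i.succ j.castSucc) (d i.castSucc j.castSucc)
              (d i.castSucc j.succ) (d i.succ j.succ) +
            (-(2 * (Real.pi : ℂ) * Complex.I * x) - (Real.pi : ℂ) * Complex.I * τ) := by
          intro i; ring
        rw [Finset.sum_congr rfl (fun i _ => expand i), Finset.sum_add_distrib,
          Finset.sum_add_distrib, ← Finset.mul_sum, ← Finset.mul_sum, hC,
          Finset.sum_const, Finset.card_univ, Fintype.card_fin, nsmul_eq_mul]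
        ring
      rw [hsum, Complex.exp_add]
      ring
    rw [hcol]
    ring



end
end

section
/- The explicit elliptic weight-function expression is symmetric in both sets of variables: for every n ≥ 1, every permutation π of {1,…,n}, and all u_1,…,u_n, v_1,…,v_n ∈ ℂ with v_i − v_j ∉ Γ and v_i − v_j − ħ ∉ Γ for all i ≠ j, one has Z^(n)(u_n,…,u_1; v_n,…,v_1; λ) = Z^(n)(u_{π(n)},…,u_{π(1)}; v_n,…,v_1; λ) and Z^(n)(u_n,…,u_1; v_n,…,v_1; λ) = Z^(n)(u_n,…,u_1; v_{π(n)},…,v_{π(1)}; λ). -/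
open Complex BigOperators

noncomputable section

/-- The explicit (weight-function) expression `Z^(n)(u_n,…,u_1; v_n,…,v_1; λ)`;
`u i`, `v j` denote `u_{i+1}`, `v_{j+1}`, and `σ` ranges over permutations. -/
def Zexp (θ : ℂ → ℂ) (hbar lam : ℂ) (n : ℕ) (u v : Fin n → ℂ) : ℂ :=
  (∏ k : Fin n, ∏ m : Fin n, if m < k then θ (v k - v m - hbar) / θ (v k - v m) else 1) *
  ∑ σ : Equiv.Perm (Fin n),
    (∏ l : Fin n, ∏ l' : Fin n,
        if l < l' ∧ σ l' < σ l then
          θ (v (σ l) - v (σ l') + hbar) / θ (v (σ l) - v (σ l') - hbar) else 1) *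
    (∏ k : Fin n, ∏ m : Fin n, if k < m then θ (u k - v (σ m)) else 1) *
    (∏ k : Fin n, ∏ m : Fin n, if m < k then θ (u k - v (σ m) + hbar) else 1) *
    (∏ m : Fin n, θ (u m - v (σ m) - lam - ((m : ℕ) : ℂ) * hbar) * θ hbar /
        θ (-lam - ((m : ℕ) : ℂ) * hbar))

namespace ZAux

variable {τ : ℂ}

lemma gamma_zero : (0:ℂ) ∈ latticeGamma τ := ⟨0, 0, by simp⟩

lemma gamma_neg {x : ℂ} (h : x ∈ latticeGamma τ) : -x ∈ latticeGamma τ := by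
  obtain ⟨a, b, rfl⟩ := h; exact ⟨-a, -b, by push_cast; ring⟩

lemma gamma_add {x y : ℂ} (hx : x ∈ latticeGamma τ) (hy : y ∈ latticeGamma τ) :
    x + y ∈ latticeGamma τ := by
  obtain ⟨a, b, rfl⟩ := hx; obtain ⟨c, d, rfl⟩ := hy
  exact ⟨a + c, b + d, by push_cast; ring⟩

lemma gamma_sub {x y : ℂ} (hx : x ∈ latticeGamma τ) (hy : y ∈ latticeGamma τ) :
    x - y ∈ latticeGamma τ := by
  rw [sub_eq_add_neg]; exact gamma_add hx (gamma_neg hy)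

lemma gamma_countable : (latticeGamma τ).Countable := by
  have : latticeGamma τ = Set.range (fun p : ℤ × ℤ => (p.1 : ℂ) + (p.2 : ℂ) * τ) := by
    ext x; constructor
    · rintro ⟨a, b, rfl⟩; exact ⟨⟨a, b⟩, rfl⟩
    · rintro ⟨⟨a, b⟩, rfl⟩; exact ⟨a, b, rfl⟩
  rw [this]; exact Set.countable_range _

/-- continuity/density extension through a countable exceptional set -/
lemma ext_countable {f g : ℂ → ℂ} (hf : Continuous f) (hg : Continuous g)
    {S : Set ℂ} (hS : S.Countable) (h : ∀ z ∉ S, f z = g z) : ∀ z, f z = g z := by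
  have hd : Dense Sᶜ := hS.dense_compl ℂ
  have := Continuous.ext_on hd hf hg (fun z hz => h z hz)
  exact fun z => congrFun this z

/-- Liouville for doubly periodic entire functions -/
lemma periodic_const {f : ℂ → ℂ} (hτ : 0 < τ.im) (hf : Differentiable ℂ f)
    (h1 : ∀ z, f (z + 1) = f z) (h2 : ∀ z, f (z + τ) = f z) :
    ∀ z w, f z = f w := by
  have hp1 : Function.Periodic f 1 := h1
  have hp2 : Function.Periodic f τ := h2
  have key : ∀ z : ℂ, ∃ w : ℂ, ‖w‖ ≤ 1 + τ.im ∧ f z = f w := by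
    intro z
    set b : ℤ := ⌊z.im / τ.im⌋ with hb
    set z' : ℂ := z - (b : ℂ) * τ with hz'
    set a : ℤ := ⌊z'.re⌋ with ha
    refine ⟨z' - (a : ℂ), ?_, ?_⟩
    · have him : (z' - (a:ℂ)).im = z.im - (b:ℝ) * τ.im := by
        simp [hz', Complex.sub_im, Complex.mul_im]
      have hre : (z' - (a:ℂ)).re = z'.re - (a:ℝ) := by simp [Complex.sub_re]
      have h1' : 0 ≤ z.im - (b:ℝ) * τ.im := by
        have hb1 : (b:ℝ) ≤ z.im / τ.im := Int.floor_le _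
        have := mul_le_mul_of_nonneg_right hb1 (le_of_lt hτ)
        rw [div_mul_cancel₀ _ (ne_of_gt hτ)] at this
        linarith
      have h2' : z.im - (b:ℝ) * τ.im < τ.im := by
        have hb1 : z.im / τ.im < (b:ℝ) + 1 := Int.lt_floor_add_one _
        have := (div_lt_iff₀ hτ).mp hb1
        nlinarith
      have h3' : 0 ≤ z'.re - (a:ℝ) := by
        have := Int.floor_le z'.re; linarith
      have h4' : z'.re - (a:ℝ) < 1 := by
        have := Int.lt_floor_add_one z'.re; linarith
      calc ‖z' - (a:ℂ)‖ ≤ |(z' - (a:ℂ)).re| + |(z' - (a:ℂ)).im| :=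
            Complex.norm_le_abs_re_add_abs_im _
        _ ≤ 1 + τ.im := by
            rw [him, hre, _root_.abs_of_nonneg h3', _root_.abs_of_nonneg h1']; linarith
    · have e1 : f z' = f z := by
        simpa [hz'] using hp2.sub_int_mul_eq (x := z) b
      have e2 : f (z' - (a:ℂ)) = f z' := by
        simpa using hp1.sub_int_mul_eq (x := z') a
      rw [e2, e1]
  -- boundedness
  obtain ⟨C, hC⟩ : ∃ C, ∀ x ∈ Metric.closedBall (0:ℂ) (1 + τ.im), ‖f x‖ ≤ C := by
    have hcpt : IsCompact (Metric.closedBall (0:ℂ) (1 + τ.im)) := isCompact_closedBall _ _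
    obtain ⟨C, hC⟩ := hcpt.exists_bound_of_continuousOn (hf.continuous.continuousOn (s := _))
    exact ⟨C, fun x hx => hC x hx⟩
  have hbd : Bornology.IsBounded (Set.range f) := by
    rw [Metric.isBounded_iff_subset_closedBall 0]
    refine ⟨C, ?_⟩
    rintro y ⟨z, rfl⟩
    obtain ⟨w, hw1, hw2⟩ := key z
    rw [hw2]
    simpa [Complex.dist_eq] using hC w (by simpa [Complex.dist_eq] using hw1)
  intro z w
  exact hf.apply_eq_apply_of_bounded hbd z w

/-- transfer of zero sets along the lattice for quasi-periodic functions -/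
lemma zero_step {f : ℂ → ℂ} (c : ℂ) (hc : ∀ z, f (z + c) = 0 ↔ f z = 0) :
    ∀ (a : ℤ) (z : ℂ), f (z + (a : ℂ) * c) = 0 ↔ f z = 0 := by
  intro a
  induction a using Int.induction_on with
  | zero => simp
  | succ k ih =>
    intro z
    push_cast
    push_cast at ih
    rw [show z + ((k:ℂ) + 1) * c = (z + (k:ℂ) * c) + c by ring, hc, ih]
  | pred k ih =>
    intro z
    push_cast
    push_cast at ih
    have h1' := hc (z + (-(k:ℂ) - 1) * c)
    rw [show z + (-(k:ℂ) - 1) * c + c = z + -(k:ℂ) * c by ring] at h1'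
    rw [show z + (-(k:ℂ) - 1) * c = z + (-(k:ℂ) - 1) * c from rfl]
    exact (h1'.symm.trans (ih z))

lemma zero_iff_gamma {f : ℂ → ℂ}
    (h1 : ∀ z, f (z + 1) = 0 ↔ f z = 0) (h2 : ∀ z, f (z + τ) = 0 ↔ f z = 0) :
    ∀ (z g : ℂ), g ∈ latticeGamma τ → (f (z + g) = 0 ↔ f z = 0) := by
  rintro z g ⟨a, b, rfl⟩
  have k1 := zero_step 1 (by simpa using h1) a
  have k2 := zero_step τ h2 b
  rw [show z + ((a:ℂ) + (b:ℂ) * τ) = (z + (b:ℂ)*τ) + (a:ℂ)*1 by ring, k1, k2]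

/-- Master lemma: quotient of entire functions with matching quasi-periodicity,
where D has simple zeros all shared by N, is constant. -/
lemma master (hτ : 0 < τ.im) {N D : ℂ → ℂ}
    (hN : Differentiable ℂ N) (hD : Differentiable ℂ D)
    (hvan : ∀ z, D z = 0 → N z = 0) (hsimp : ∀ z, D z = 0 → deriv D z ≠ 0)
    (hq1 : ∀ z, N (z + 1) * D z = N z * D (z + 1))
    (hqτ : ∀ z, N (z + τ) * D z = N z * D (z + τ))
    (hD1 : ∀ z, D (z + 1) = 0 ↔ D z = 0) (hDτ : ∀ z, D (z + τ) = 0 ↔ D z = 0) :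
    ∃ K : ℂ, ∀ z, N z = K * D z := by
  classical
  set g : ℂ → ℂ := fun z => if D z = 0 then deriv N z / deriv D z else N z / D z with hg
  -- punctured nonvanishing near zeros of D
  have hpunct : ∀ z₀, D z₀ = 0 → ∀ᶠ z in nhdsWithin z₀ {z₀}ᶜ, D z ≠ 0 := by
    intro z₀ h0
    rcases (hD.analyticAt z₀).eventually_eq_zero_or_eventually_ne_zero with hc | hc
    · exfalso
      apply hsimp z₀ h0
      have : deriv D z₀ = deriv (fun _ => (0:ℂ)) z₀ := Filter.EventuallyEq.deriv_eq hc
      simpa using this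
    · exact hc
  have gdiff : Differentiable ℂ g := by
    intro z₀
    by_cases h0 : D z₀ = 0
    · -- removable singularity via dslope
      have hNd : Differentiable ℂ (dslope N z₀) := by
        rw [← differentiableOn_univ] at hN ⊢
        exact (Complex.differentiableOn_dslope (by simp)).mpr hN
      have hDd : Differentiable ℂ (dslope D z₀) := by
        rw [← differentiableOn_univ] at hD ⊢
        exact (Complex.differentiableOn_dslope (by simp)).mpr hD
      have hDd0 : dslope D z₀ z₀ ≠ 0 := by
        rw [dslope_same]; exact hsimp z₀ h0
      have hev : g =ᶠ[nhds z₀] fun z => dslope N z₀ z / dslope D z₀ z := by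
        have hDne : ∀ᶠ z in nhds z₀, z ≠ z₀ → D z ≠ 0 := by
          have := hpunct z₀ h0
          rwa [eventually_nhdsWithin_iff] at this
        filter_upwards [hDne] with z hz
        by_cases hzz : z = z₀
        · subst hzz
          simp [hg, h0, dslope_same]
        · have hDz : D z ≠ 0 := hz hzz
          have hsub : z - z₀ ≠ 0 := sub_ne_zero.mpr hzz
          have eN : N z = (z - z₀) * dslope N z₀ z := by
            have := sub_smul_dslope N z₀ z
            rw [hvan z₀ h0] at this
            simpa [smul_eq_mul] using this.symm
          have eD : D z = (z - z₀) * dslope D z₀ z := by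
            have := sub_smul_dslope D z₀ z
            rw [h0] at this
            simpa [smul_eq_mul] using this.symm
          simp only [hg, if_neg hDz]
          rw [eN, eD, mul_div_mul_left _ _ hsub]
      have : DifferentiableAt ℂ (fun z => dslope N z₀ z / dslope D z₀ z) z₀ :=
        (hNd z₀).div (hDd z₀) hDd0
      exact this.congr_of_eventuallyEq hev
    · have hev : g =ᶠ[nhds z₀] fun z => N z / D z := by
        filter_upwards [(hD.continuous.continuousAt (x := z₀)).eventually_ne h0] with z hz
        simp [hg, if_neg hz]
      exact ((hN z₀).div (hD z₀) h0).congr_of_eventuallyEq hev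
  have hNgD : ∀ z, N z = g z * D z := by
    intro z
    by_cases h0 : D z = 0
    · rw [h0, mul_zero]; exact hvan z h0
    · simp [hg, if_neg h0, div_mul_cancel₀ _ h0]
  -- density of nonvanishing set
  have hdense : Dense {z : ℂ | D z ≠ 0} := by
    intro z
    rw [mem_closure_iff_frequently]
    by_cases h0 : D z = 0
    · exact ((hpunct z h0).frequently.filter_mono nhdsWithin_le_nhds)
    · exact ((hD.continuous.continuousAt (x := z)).eventually_ne h0).frequently
  have hgper : ∀ (p : ℂ), (∀ w, N (w + p) * D w = N w * D (w + p)) →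
      (∀ w, (D (w + p) = 0 ↔ D w = 0)) → ∀ z, g (z + p) = g z := by
    intro p hq hDp
    have hcont : Continuous (fun z : ℂ => g (z + p)) :=
      gdiff.continuous.comp (continuous_id.add continuous_const)
    have heq : (fun z : ℂ => g (z + p)) = g := by
      refine Continuous.ext_on hdense hcont gdiff.continuous ?_
      intro z hz
      have hz' : D z ≠ 0 := hz
      have hzp : D (z + p) ≠ 0 := fun h => hz' ((hDp z).mp h)
      show g (z + p) = g z
      simp only [hg, if_neg hz', if_neg hzp]
      rw [div_eq_div_iff hzp hz']
      exact hq z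
    exact fun z => congrFun heq z
  have hconst := periodic_const hτ gdiff (hgper 1 hq1 hD1) (hgper τ hqτ hDτ)
  refine ⟨g 0, fun z => ?_⟩
  rw [hNgD z, hconst z 0]

section Theta

variable (τ : ℂ) (θ : ℂ → ℂ)

/-- nonvanishing off the lattice -/
lemma theta_ne (hθzero : ∀ x : ℂ, θ x = 0 ↔ x ∈ latticeGamma τ) {x : ℂ}
    (hx : x ∉ latticeGamma τ) : θ x ≠ 0 :=
  fun h => hx ((hθzero x).mp h)

lemma theta_zero_pt (hθzero : ∀ x : ℂ, θ x = 0 ↔ x ∈ latticeGamma τ) : θ 0 = 0 :=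
  (hθzero 0).mpr gamma_zero

/-- Oddness of θ -/
lemma theta_odd (hτ : 0 < τ.im) (hθdiff : Differentiable ℂ θ)
    (hθ1 : ∀ x : ℂ, θ (x + 1) = -θ x)
    (hθτ : ∀ x : ℂ, θ (x + τ) =
      -Complex.exp (-(2 * (Real.pi : ℂ) * Complex.I * x) - (Real.pi : ℂ) * Complex.I * τ) * θ x)
    (hθ0 : deriv θ 0 = 1)
    (hθzero : ∀ x : ℂ, θ x = 0 ↔ x ∈ latticeGamma τ)
    (hθsimple : ∀ x ∈ latticeGamma τ, deriv θ x ≠ 0) :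
    ∀ z, θ (-z) = -θ z := by
  set π' : ℂ := (Real.pi : ℂ) with hπ'
  have hneg1 : ∀ z : ℂ, θ (-(z+1)) = -θ (-z) := by
    intro z
    have e := hθ1 (-z - 1)
    rw [show -z - 1 + 1 = -z by ring] at e
    rw [show -(z+1) = -z-1 by ring]
    linear_combination e
  have hnegτ : ∀ z : ℂ, θ (-(z+τ)) = -Complex.exp (-(2 * π' * Complex.I * z) - π' * Complex.I * τ) * θ (-z) := by
    intro z
    have e := hθτ (-(z + τ))
    rw [show -(z+τ) + τ = -z by ring] at e
    have hE : Complex.exp (-(2 * π' * Complex.I * (-(z+τ))) - π' * Complex.I * τ) *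
        Complex.exp (-(2 * π' * Complex.I * z) - π' * Complex.I * τ) = 1 := by
      rw [← Complex.exp_add, show (-(2 * π' * Complex.I * (-(z+τ))) - π' * Complex.I * τ) +
        (-(2 * π' * Complex.I * z) - π' * Complex.I * τ) = 0 by ring, Complex.exp_zero]
    linear_combination Complex.exp (-(2 * π' * Complex.I * z) - π' * Complex.I * τ) * e -
      θ (-(z + τ)) * hE
  obtain ⟨K, hK⟩ : ∃ K : ℂ, ∀ z, θ (-z) + θ z = K * θ z := by
    apply master hτ (N := fun z => θ (-z) + θ z) (D := θ)
    · exact (hθdiff.comp differentiable_neg).add hθdiff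
    · exact hθdiff
    · intro z hz
      have hzΓ := (hθzero z).mp hz
      have : θ (-z) = 0 := (hθzero (-z)).mpr (gamma_neg hzΓ)
      simp [this, hz]
    · intro z hz
      exact hθsimple z ((hθzero z).mp hz)
    · intro z
      have h1 := hθ1 z
      have h2 := hneg1 z
      show (θ (-(z+1)) + θ (z+1)) * θ z = (θ (-z) + θ z) * θ (z+1)
      linear_combination (θ z) * h2 - (θ (-z)) * h1
    · intro z
      have h1 := hθτ z
      have h2 := hnegτ z
      show (θ (-(z+τ)) + θ (z+τ)) * θ z = (θ (-z) + θ z) * θ (z+τ)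
      linear_combination (θ z) * h2 - (θ (-z)) * h1
    · intro z
      rw [hθ1 z]
      simp
    · intro z
      rw [hθτ z]
      constructor
      · intro h
        rcases mul_eq_zero.mp h with h' | h'
        · exact absurd h' (by simp [Complex.exp_ne_zero])
        · exact h'
      · intro h; rw [h, mul_zero]
  have hK0 : K = 0 := by
    have hθd0 : HasDerivAt θ 1 0 := by
      have := (hθdiff 0).hasDerivAt
      rwa [hθ0] at this
    have hd1 : HasDerivAt (fun z : ℂ => θ (-z)) (-1) 0 := by
      have hneg : HasDerivAt (fun z : ℂ => -z) (-1 : ℂ) 0 := hasDerivAt_neg 0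
      have hθd0' : HasDerivAt θ 1 (-0 : ℂ) := by rwa [neg_zero]
      have := hθd0'.comp 0 hneg
      rw [show (1:ℂ) * -1 = -1 by ring] at this
      exact this
    have hdN : HasDerivAt (fun z : ℂ => θ (-z) + θ z) 0 0 := by
      have := hd1.add hθd0
      rw [show (-1:ℂ) + 1 = 0 by ring] at this
      exact this
    have hdKD : HasDerivAt (fun z : ℂ => K * θ z) K 0 := by
      have := hθd0.const_mul K
      simpa using this
    have hfun : (fun z : ℂ => θ (-z) + θ z) = fun z => K * θ z := funext hK
    rw [hfun] at hdN
    exact (hdN.unique hdKD).symm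
  intro z
  have := hK z
  rw [hK0, zero_mul] at this
  linear_combination this

/-- The Weierstrass three-term theta identity. -/
lemma theta_star (hτ : 0 < τ.im) (hθdiff : Differentiable ℂ θ)
    (hθ1 : ∀ x : ℂ, θ (x + 1) = -θ x)
    (hθτ : ∀ x : ℂ, θ (x + τ) =
      -Complex.exp (-(2 * (Real.pi : ℂ) * Complex.I * x) - (Real.pi : ℂ) * Complex.I * τ) * θ x)
    (hθ0 : deriv θ 0 = 1)
    (hθzero : ∀ x : ℂ, θ x = 0 ↔ x ∈ latticeGamma τ)
    (hθsimple : ∀ x ∈ latticeGamma τ, deriv θ x ≠ 0) :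
    ∀ X y u w : ℂ,
      θ (X+u) * θ (X-u) * (θ (y+w) * θ (y-w)) - θ (X+w) * θ (X-w) * (θ (y+u) * θ (y-u))
        = θ (X+y) * θ (X-y) * (θ (u+w) * θ (u-w)) := by
  have hodd := theta_odd τ θ hτ hθdiff hθ1 hθτ hθ0 hθzero hθsimple
  have hθ00 : θ 0 = 0 := theta_zero_pt τ θ hθzero
  have hcont : Continuous θ := hθdiff.continuous
  set π' : ℂ := (Real.pi : ℂ) with hπ'
  -- shifted periodicity helpers
  have per1a : ∀ c z : ℂ, θ (z + 1 + c) = -θ (z + c) := by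
    intro c z; have := hθ1 (z + c); rw [show z + c + 1 = z + 1 + c by ring] at this; exact this
  have per1s : ∀ c z : ℂ, θ (z + 1 - c) = -θ (z - c) := by
    intro c z; have := hθ1 (z - c); rw [show z - c + 1 = z + 1 - c by ring] at this; exact this
  have perτa : ∀ c z : ℂ, θ (z + τ + c)
      = -Complex.exp (-(2 * π' * Complex.I * (z + c)) - π' * Complex.I * τ) * θ (z + c) := by
    intro c z; have := hθτ (z + c); rw [show z + c + τ = z + τ + c by ring] at this; exact this
  have perτs : ∀ c z : ℂ, θ (z + τ - c)
      = -Complex.exp (-(2 * π' * Complex.I * (z - c)) - π' * Complex.I * τ) * θ (z - c) := by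
    intro c z; have := hθτ (z - c); rw [show z - c + τ = z + τ - c by ring] at this; exact this
  set Q : ℂ → ℂ := fun z => Complex.exp (-(4 * π' * Complex.I * z) - 2 * π' * Complex.I * τ)
    with hQdef
  have pair1 : ∀ c z : ℂ, θ (z + 1 + c) * θ (z + 1 - c) = θ (z + c) * θ (z - c) := by
    intro c z; rw [per1a, per1s]; ring
  have pairτ : ∀ c z : ℂ, θ (z + τ + c) * θ (z + τ - c) = Q z * (θ (z + c) * θ (z - c)) := by
    intro c z; rw [perτa, perτs]
    have hQ : Complex.exp (-(2 * π' * Complex.I * (z + c)) - π' * Complex.I * τ) *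
        Complex.exp (-(2 * π' * Complex.I * (z - c)) - π' * Complex.I * τ) = Q z := by
      rw [hQdef]; rw [← Complex.exp_add]; congr 1; ring
    linear_combination (θ (z + c) * θ (z - c)) * hQ
  have hQne : ∀ z, Q z ≠ 0 := fun z => Complex.exp_ne_zero _
  have hshift : ∀ c : ℂ, Differentiable ℂ (fun X => θ (X + c)) :=
    fun c => hθdiff.comp (differentiable_id.add (differentiable_const c))
  have hshift' : ∀ c : ℂ, Differentiable ℂ (fun X => θ (X - c)) :=
    fun c => hθdiff.comp (differentiable_id.sub (differentiable_const c))
  -- main generic case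
  have main : ∀ u w y : ℂ, (2*y ∉ latticeGamma τ) → (w + y ∉ latticeGamma τ) →
      (w - y ∉ latticeGamma τ) → ∀ X : ℂ,
      θ (X+u) * θ (X-u) * (θ (y+w) * θ (y-w)) - θ (X+w) * θ (X-w) * (θ (y+u) * θ (y-u))
        - θ (X+y) * θ (X-y) * (θ (u+w) * θ (u-w)) = 0 := by
    intro u w y h2y hwy hwy'
    set Cw : ℂ := θ (y+w) * θ (y-w) with hCw
    set Cu : ℂ := θ (y+u) * θ (y-u) with hCu
    set C3 : ℂ := θ (u+w) * θ (u-w) with hC3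
    set N : ℂ → ℂ := fun X => θ (X+u) * θ (X-u) * Cw - θ (X+w) * θ (X-w) * Cu
      - θ (X+y) * θ (X-y) * C3 with hN
    set D : ℂ → ℂ := fun X => θ (X+y) * θ (X-y) with hD
    have hNdiff : Differentiable ℂ N := by
      apply Differentiable.sub
      apply Differentiable.sub
      · exact ((hshift u).mul (hshift' u)).mul_const _
      · exact ((hshift w).mul (hshift' w)).mul_const _
      · exact ((hshift y).mul (hshift' y)).mul_const _
    have hDdiff : Differentiable ℂ D := (hshift y).mul (hshift' y)
    have hN1 : ∀ z, N (z+1) = N z := by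
      intro z; simp only [hN]; rw [pair1 u, pair1 w, pair1 y]
    have hNτ : ∀ z, N (z+τ) = Q z * N z := by
      intro z; simp only [hN]; rw [pairτ u, pairτ w, pairτ y]; ring
    have hD1 : ∀ z, D (z+1) = D z := by
      intro z; simp only [hD]; rw [pair1 y]
    have hDτ : ∀ z, D (z+τ) = Q z * D z := by
      intro z; simp only [hD]; rw [pairτ y]
    -- zeros of N at ±y
    have hNy : N y = 0 := by
      simp only [hN]
      have h0 : θ (y - y) = 0 := by rw [show y - y = (0:ℂ) by ring]; exact hθ00
      rw [h0]; ring
    have hNy' : N (-y) = 0 := by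
      simp only [hN]
      have o1 : θ (-y+u) = -θ (y-u) := by rw [show -y+u = -(y-u) by ring]; exact hodd _
      have o2 : θ (-y-u) = -θ (y+u) := by rw [show -y-u = -(y+u) by ring]; exact hodd _
      have o3 : θ (-y+w) = -θ (y-w) := by rw [show -y+w = -(y-w) by ring]; exact hodd _
      have o4 : θ (-y-w) = -θ (y+w) := by rw [show -y-w = -(y+w) by ring]; exact hodd _
      have h0 : θ (-y+y) = 0 := by rw [show -y+y = (0:ℂ) by ring]; exact hθ00
      rw [o1, o2, o3, o4, h0, hCw, hCu]; ring
    have hNiff1 : ∀ z, N (z+1) = 0 ↔ N z = 0 := fun z => by rw [hN1]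
    have hNiffτ : ∀ z, N (z+τ) = 0 ↔ N z = 0 := by
      intro z; rw [hNτ]; constructor
      · intro h; rcases mul_eq_zero.mp h with h' | h'
        · exact absurd h' (hQne z)
        · exact h'
      · intro h; rw [h, mul_zero]
    have hvan : ∀ z, D z = 0 → N z = 0 := by
      intro z hz
      rcases mul_eq_zero.mp hz with h' | h'
      · -- z + y ∈ Γ, z = -y + (z+y)
        have hγ : z + y ∈ latticeGamma τ := (hθzero _).mp h'
        have := (zero_iff_gamma hNiff1 hNiffτ (-y) (z+y) hγ)
        rw [show -y + (z + y) = z by ring] at this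
        exact this.mpr hNy'
      · have hγ : z - y ∈ latticeGamma τ := (hθzero _).mp h'
        have := (zero_iff_gamma hNiff1 hNiffτ y (z-y) hγ)
        rw [show y + (z - y) = z by ring] at this
        exact this.mpr hNy
    have hsimp : ∀ z, D z = 0 → deriv D z ≠ 0 := by
      intro z hz
      have hder : deriv D z = deriv θ (z+y) * θ (z-y) + θ (z+y) * deriv θ (z-y) := by
        rw [hD]
        rw [deriv_fun_mul ((hshift y) z) ((hshift' y) z)]
        rw [deriv_comp_add_const, deriv_comp_sub_const]
      have hnot : ¬ (θ (z+y) = 0 ∧ θ (z-y) = 0) := by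
        rintro ⟨ha, hb⟩
        apply h2y
        have := gamma_sub ((hθzero _).mp ha) ((hθzero _).mp hb)
        rw [show z + y - (z - y) = 2*y by ring] at this
        exact this
      rcases mul_eq_zero.mp hz with h' | h'
      · have hb : θ (z-y) ≠ 0 := fun hb => hnot ⟨h', hb⟩
        have hda : deriv θ (z+y) ≠ 0 := hθsimple _ ((hθzero _).mp h')
        rw [hder, h', zero_mul, add_zero]
        exact mul_ne_zero hda hb
      · have ha : θ (z+y) ≠ 0 := fun ha => hnot ⟨ha, h'⟩
        have hdb : deriv θ (z-y) ≠ 0 := hθsimple _ ((hθzero _).mp h')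
        rw [hder, h', mul_zero, zero_add]
        exact mul_ne_zero ha hdb
    have hDiffτ : ∀ z, D (z+τ) = 0 ↔ D z = 0 := by
      intro z; rw [hDτ]; constructor
      · intro h; rcases mul_eq_zero.mp h with h' | h'
        · exact absurd h' (hQne z)
        · exact h'
      · intro h; rw [h, mul_zero]
    obtain ⟨K, hK⟩ := master hτ hNdiff hDdiff hvan hsimp
      (fun z => by rw [hN1, hD1])
      (fun z => by rw [hNτ, hDτ]; ring)
      (fun z => by rw [hD1]) hDiffτ
    have hK0 : K = 0 := by
      have hNw : N w = 0 := by
        simp only [hN, hCw, hCu, hC3]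
        have h0 : θ (w - w) = 0 := by rw [show w - w = (0:ℂ) by ring]; exact hθ00
        have o1 : θ (y-w) = -θ (w-y) := by rw [show y-w = -(w-y) by ring]; exact hodd _
        have o2 : θ (u-w) = -θ (w-u) := by rw [show u-w = -(w-u) by ring]; exact hodd _
        have c1 : θ (y+w) = θ (w+y) := by rw [show y+w = w+y by ring]
        have c2 : θ (u+w) = θ (w+u) := by rw [show u+w = w+u by ring]
        rw [h0, o1, o2, c1, c2]; ring
      have hDw : D w ≠ 0 := by
        apply mul_ne_zero
        · exact theta_ne τ θ hθzero hwy
        · exact theta_ne τ θ hθzero hwy'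
      have := hK w
      rw [hNw] at this
      rcases mul_eq_zero.mp this.symm with h' | h'
      · exact h'
      · exact absurd h' hDw
    intro X
    have := hK X
    rw [hK0, zero_mul] at this
    simp only [hN, hCw, hCu, hC3] at this
    linear_combination this
  -- extension to all y by continuity
  intro X y u w
  have hext : ∀ y : ℂ,
      θ (X+u) * θ (X-u) * (θ (y+w) * θ (y-w)) - θ (X+w) * θ (X-w) * (θ (y+u) * θ (y-u))
        - θ (X+y) * θ (X-y) * (θ (u+w) * θ (u-w)) = 0 := by
    set S : Set ℂ := {y | 2*y ∈ latticeGamma τ} ∪ ({y | w + y ∈ latticeGamma τ}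
      ∪ {y | w - y ∈ latticeGamma τ}) with hS
    have hSc : S.Countable := by
      apply Set.Countable.union
      · have : {y : ℂ | 2*y ∈ latticeGamma τ} = (fun g => g/2) '' (latticeGamma τ) := by
          ext y; constructor
          · intro hy; exact ⟨2*y, hy, by ring⟩
          · rintro ⟨g, hg, rfl⟩; simpa [mul_div_cancel₀] using hg
        rw [this]; exact gamma_countable.image _
      apply Set.Countable.union
      · have : {y : ℂ | w + y ∈ latticeGamma τ} = (fun g => g - w) '' (latticeGamma τ) := by
          ext y; constructor
          · intro hy; exact ⟨w + y, hy, by ring⟩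
          · rintro ⟨g, hg, rfl⟩; simpa using hg
        rw [this]; exact gamma_countable.image _
      · have : {y : ℂ | w - y ∈ latticeGamma τ} = (fun g => w - g) '' (latticeGamma τ) := by
          ext y; constructor
          · intro hy; exact ⟨w - y, hy, by ring⟩
          · rintro ⟨g, hg, rfl⟩; simpa using hg
        rw [this]; exact gamma_countable.image _
    have hcY : Continuous (fun y : ℂ =>
        θ (X+u) * θ (X-u) * (θ (y+w) * θ (y-w)) - θ (X+w) * θ (X-w) * (θ (y+u) * θ (y-u))
        - θ (X+y) * θ (X-y) * (θ (u+w) * θ (u-w))) := by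
      have c1 : Continuous (fun y : ℂ => θ (y + w)) :=
        hcont.comp (continuous_id.add continuous_const)
      have c2 : Continuous (fun y : ℂ => θ (y - w)) :=
        hcont.comp (continuous_id.sub continuous_const)
      have c3 : Continuous (fun y : ℂ => θ (y + u)) :=
        hcont.comp (continuous_id.add continuous_const)
      have c4 : Continuous (fun y : ℂ => θ (y - u)) :=
        hcont.comp (continuous_id.sub continuous_const)
      have c5 : Continuous (fun y : ℂ => θ (X + y)) :=
        hcont.comp (continuous_const.add continuous_id)
      have c6 : Continuous (fun y : ℂ => θ (X - y)) :=
        hcont.comp (continuous_const.sub continuous_id)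
      continuity
    have := ext_countable hcY continuous_const hSc (fun y hy => by
      have hy1 : 2*y ∉ latticeGamma τ := fun h => hy (Or.inl h)
      have hy2 : w + y ∉ latticeGamma τ := fun h => hy (Or.inr (Or.inl h))
      have hy3 : w - y ∉ latticeGamma τ := fun h => hy (Or.inr (Or.inr h))
      exact main u w y hy1 hy2 hy3 X)
    exact this
  have := hext y
  linear_combination this

/-- pair form of the Weierstrass identity -/
lemma starP
    (hstar : ∀ X y u w : ℂ,
      θ (X+u) * θ (X-u) * (θ (y+w) * θ (y-w)) - θ (X+w) * θ (X-w) * (θ (y+u) * θ (y-u))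
        = θ (X+y) * θ (X-y) * (θ (u+w) * θ (u-w)))
    (a₁ a₂ b₁ b₂ c₁ c₂ p₁ p₂ q₁ q₂ r₁ r₂ : ℂ)
    (h1 : a₁ + a₂ = b₁ + b₂) (h2 : a₁ + a₂ = c₁ + c₂)
    (hp1 : 2*p₁ = c₁ - c₂ + b₁ - b₂) (hp2 : 2*p₂ = c₁ - c₂ - b₁ + b₂)
    (hq1 : 2*q₁ = c₁ - c₂ + a₁ - a₂) (hq2 : 2*q₂ = c₁ - c₂ - a₁ + a₂)
    (hr1 : 2*r₁ = a₁ - a₂ + b₁ - b₂) (hr2 : 2*r₂ = a₁ - a₂ - b₁ + b₂) :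
    θ a₁ * θ a₂ * (θ p₁ * θ p₂) - θ b₁ * θ b₂ * (θ q₁ * θ q₂)
      = θ c₁ * θ c₂ * (θ r₁ * θ r₂) := by
  have H := hstar ((a₁+a₂)/2) ((c₁-c₂)/2) ((a₁-a₂)/2) ((b₁-b₂)/2)
  rw [show (a₁+a₂)/2 + (a₁-a₂)/2 = a₁ by ring,
      show (a₁+a₂)/2 - (a₁-a₂)/2 = a₂ by ring,
      show (c₁-c₂)/2 + (b₁-b₂)/2 = p₁ by linear_combination -hp1/2,
      show (c₁-c₂)/2 - (b₁-b₂)/2 = p₂ by linear_combination -hp2/2,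
      show (a₁+a₂)/2 + (b₁-b₂)/2 = b₁ by linear_combination h1/2,
      show (a₁+a₂)/2 - (b₁-b₂)/2 = b₂ by linear_combination h1/2,
      show (c₁-c₂)/2 + (a₁-a₂)/2 = q₁ by linear_combination -hq1/2,
      show (c₁-c₂)/2 - (a₁-a₂)/2 = q₂ by linear_combination -hq2/2,
      show (a₁+a₂)/2 + (c₁-c₂)/2 = c₁ by linear_combination h2/2,
      show (a₁+a₂)/2 - (c₁-c₂)/2 = c₂ by linear_combination h2/2,
      show (a₁-a₂)/2 + (b₁-b₂)/2 = r₁ by linear_combination -hr1/2,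
      show (a₁-a₂)/2 - (b₁-b₂)/2 = r₂ by linear_combination -hr2/2] at H
  exact H

/-- The exchange identity: symmetry of E(a,b). -/
lemma theta_exchange (hτ : 0 < τ.im) (hθdiff : Differentiable ℂ θ)
    (hθ1 : ∀ x : ℂ, θ (x + 1) = -θ x)
    (hθτ : ∀ x : ℂ, θ (x + τ) =
      -Complex.exp (-(2 * (Real.pi : ℂ) * Complex.I * x) - (Real.pi : ℂ) * Complex.I * τ) * θ x)
    (hθ0 : deriv θ 0 = 1)
    (hθzero : ∀ x : ℂ, θ x = 0 ↔ x ∈ latticeGamma τ)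
    (hθsimple : ∀ x ∈ latticeGamma τ, deriv θ x ≠ 0) :
    ∀ a b x y μ h : ℂ,
      θ (y-x-h) * θ (a-y) * θ (b-x+h) * θ (a-x-μ) * θ (b-y-μ-h)
        + θ (y-x+h) * θ (a-x) * θ (b-y+h) * θ (a-y-μ) * θ (b-x-μ-h)
      = θ (y-x-h) * θ (b-y) * θ (a-x+h) * θ (b-x-μ) * θ (a-y-μ-h)
        + θ (y-x+h) * θ (b-x) * θ (a-y+h) * θ (b-y-μ) * θ (a-x-μ-h) := by
  have hstar := theta_star τ θ hτ hθdiff hθ1 hθτ hθ0 hθzero hθsimple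
  have hodd := theta_odd τ θ hτ hθdiff hθ1 hθτ hθ0 hθzero hθsimple
  have hcont : Continuous θ := hθdiff.continuous
  intro a b₀ x y μ h
  -- generic case in b
  have generic : ∀ b : ℂ, θ (b-x) ≠ 0 → θ (b-y-μ) ≠ 0 →
      θ (y-x-h) * θ (a-y) * θ (b-x+h) * θ (a-x-μ) * θ (b-y-μ-h)
        + θ (y-x+h) * θ (a-x) * θ (b-y+h) * θ (a-y-μ) * θ (b-x-μ-h)
      = θ (y-x-h) * θ (b-y) * θ (a-x+h) * θ (b-x-μ) * θ (a-y-μ-h)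
        + θ (y-x+h) * θ (b-x) * θ (a-y+h) * θ (b-y-μ) * θ (a-x-μ-h) := by
    intro b hbx hbyμ
    have o1 : θ (y+μ-b) = -θ (b-y-μ) := by
      rw [show y+μ-b = -(b-y-μ) by ring]; exact hodd _
    have o2 : θ (x+μ-b) = -θ (b-x-μ) := by
      rw [show x+μ-b = -(b-x-μ) by ring]; exact hodd _
    have o3 : θ (y+μ+h-b) = -θ (b-y-μ-h) := by
      rw [show y+μ+h-b = -(b-y-μ-h) by ring]; exact hodd _
    have o4 : θ (x+μ+h-b) = -θ (b-x-μ-h) := by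
      rw [show x+μ+h-b = -(b-x-μ-h) by ring]; exact hodd _
    have o5 : θ (x-y-h) = -θ (y-x+h) := by
      rw [show x-y-h = -(y-x+h) by ring]; exact hodd _
    have o6 : θ (-μ-h) = -θ (μ+h) := by
      rw [show -μ-h = -(μ+h) by ring]; exact hodd _
    have S1 := starP θ hstar (a-y) (a-x-μ) (a-b) (a-x-y-μ+b) (a-x) (a-y-μ)
      (y+μ-b) (b-x) μ (y-x) (x+μ-b) (b-y)
      (by ring) (by ring) (by ring) (by ring) (by ring) (by ring) (by ring) (by ring)
    have S3 := starP θ hstar (a-x+h) (a-y-μ-h) (a-b) (a-x-y-μ+b) (a-x) (a-y-μ)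
      (y+μ-b) (b-x) (y+μ+h-x) (-h) (y+μ+h-b) (b-x+h)
      (by ring) (by ring) (by ring) (by ring) (by ring) (by ring) (by ring) (by ring)
    have S4 := starP θ hstar (a-y+h) (a-x-μ-h) (a-b) (a-x-y-μ+b) (a-x) (a-y-μ)
      (y+μ-b) (b-x) (μ+h) (y-x-h) (x+μ+h-b) (b-y+h)
      (by ring) (by ring) (by ring) (by ring) (by ring) (by ring) (by ring) (by ring)
    have S5 := starP θ hstar (b-y-μ-h) (b-x+h) (b-y) (b-x-μ) (b-x) (b-y-μ)
      μ (y-x) (-h) (y+μ+h-x) (x-y-h) (-μ-h)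
      (by ring) (by ring) (by ring) (by ring) (by ring) (by ring) (by ring) (by ring)
    have hΦ : θ (y-x-h) * θ (b-x+h) * θ (b-y-μ-h) * (θ μ * θ (y-x))
        - θ (y-x-h) * θ (b-y) * θ (b-x-μ) * (θ (y+μ+h-x) * θ (-h))
        - θ (y-x+h) * θ (b-x) * θ (b-y-μ) * (θ (μ+h) * θ (y-x-h)) = 0 := by
      linear_combination θ (y-x-h) * S5
        + θ (y-x-h) * θ (b-x) * θ (b-y-μ) * θ (-μ-h) * o5
        - θ (y-x-h) * θ (b-x) * θ (b-y-μ) * θ (y-x+h) * o6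
    have hΨ : θ (y-x+h) * θ (b-y+h) * θ (b-x-μ-h) * (θ (y+μ-b) * θ (b-x))
        + θ (y-x-h) * θ (b-x+h) * θ (b-y-μ-h) * (θ (x+μ-b) * θ (b-y))
        - θ (y-x-h) * θ (b-y) * θ (b-x-μ) * (θ (y+μ+h-b) * θ (b-x+h))
        - θ (y-x+h) * θ (b-x) * θ (b-y-μ) * (θ (x+μ+h-b) * θ (b-y+h)) = 0 := by
      linear_combination θ (y-x-h) * θ (b-x+h) * θ (b-y) * θ (b-y-μ-h) * o2
        - θ (y-x-h) * θ (b-x+h) * θ (b-y) * θ (b-x-μ) * o3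
        + θ (y-x+h) * θ (b-y+h) * θ (b-x) * θ (b-x-μ-h) * o1
        - θ (y-x+h) * θ (b-y+h) * θ (b-x) * θ (b-y-μ) * o4
    have hMG : (θ (y+μ-b) * θ (b-x)) *
        (θ (y-x-h) * θ (a-y) * θ (b-x+h) * θ (a-x-μ) * θ (b-y-μ-h)
          + θ (y-x+h) * θ (a-x) * θ (b-y+h) * θ (a-y-μ) * θ (b-x-μ-h))
        = (θ (y+μ-b) * θ (b-x)) *
        (θ (y-x-h) * θ (b-y) * θ (a-x+h) * θ (b-x-μ) * θ (a-y-μ-h)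
          + θ (y-x+h) * θ (b-x) * θ (a-y+h) * θ (b-y-μ) * θ (a-x-μ-h)) := by
      linear_combination (θ (y-x-h) * θ (b-x+h) * θ (b-y-μ-h)) * S1
        - (θ (y-x-h) * θ (b-y) * θ (b-x-μ)) * S3
        - (θ (y-x+h) * θ (b-x) * θ (b-y-μ)) * S4
        + (θ (a-b) * θ (a-x-y-μ+b)) * hΦ
        + (θ (a-x) * θ (a-y-μ)) * hΨ
    have hM : θ (y+μ-b) * θ (b-x) ≠ 0 := by
      apply mul_ne_zero
      · rw [o1]; exact neg_ne_zero.mpr hbyμ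
      · exact hbx
    exact mul_left_cancel₀ hM hMG
  -- continuity extension in b
  set S : Set ℂ := {b | b - x ∈ latticeGamma τ} ∪ {b | b - y - μ ∈ latticeGamma τ} with hS
  have hSc : S.Countable := by
    apply Set.Countable.union
    · have : {b : ℂ | b - x ∈ latticeGamma τ} = (fun g => g + x) '' (latticeGamma τ) := by
        ext b; constructor
        · intro hb; exact ⟨b - x, hb, by ring⟩
        · rintro ⟨g, hg, rfl⟩; simpa using hg
      rw [this]; exact gamma_countable.image _
    · have : {b : ℂ | b - y - μ ∈ latticeGamma τ} = (fun g => g + y + μ) '' (latticeGamma τ) := by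
        ext b; constructor
        · intro hb; exact ⟨b - y - μ, hb, by ring⟩
        · rintro ⟨g, hg, rfl⟩
          show g + y + μ - y - μ ∈ latticeGamma τ
          rwa [show g + y + μ - y - μ = g by ring]
      rw [this]; exact gamma_countable.image _
  have hc1 : Continuous (fun b : ℂ =>
      θ (y-x-h) * θ (a-y) * θ (b-x+h) * θ (a-x-μ) * θ (b-y-μ-h)
        + θ (y-x+h) * θ (a-x) * θ (b-y+h) * θ (a-y-μ) * θ (b-x-μ-h)) := by
    have k1 : Continuous (fun b : ℂ => θ (b-x+h)) :=
      hcont.comp ((continuous_id.sub continuous_const).add continuous_const)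
    have k2 : Continuous (fun b : ℂ => θ (b-y-μ-h)) :=
      hcont.comp (((continuous_id.sub continuous_const).sub continuous_const).sub
        continuous_const)
    have k3 : Continuous (fun b : ℂ => θ (b-y+h)) :=
      hcont.comp ((continuous_id.sub continuous_const).add continuous_const)
    have k4 : Continuous (fun b : ℂ => θ (b-x-μ-h)) :=
      hcont.comp (((continuous_id.sub continuous_const).sub continuous_const).sub
        continuous_const)
    exact ((((continuous_const.mul continuous_const).mul k1).mul continuous_const).mul k2).add
      ((((continuous_const.mul continuous_const).mul k3).mul continuous_const).mul k4)
  have hc2 : Continuous (fun b : ℂ =>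
      θ (y-x-h) * θ (b-y) * θ (a-x+h) * θ (b-x-μ) * θ (a-y-μ-h)
        + θ (y-x+h) * θ (b-x) * θ (a-y+h) * θ (b-y-μ) * θ (a-x-μ-h)) := by
    have k1 : Continuous (fun b : ℂ => θ (b-y)) :=
      hcont.comp (continuous_id.sub continuous_const)
    have k2 : Continuous (fun b : ℂ => θ (b-x-μ)) :=
      hcont.comp ((continuous_id.sub continuous_const).sub continuous_const)
    have k3 : Continuous (fun b : ℂ => θ (b-x)) :=
      hcont.comp (continuous_id.sub continuous_const)
    have k4 : Continuous (fun b : ℂ => θ (b-y-μ)) :=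
      hcont.comp ((continuous_id.sub continuous_const).sub continuous_const)
    exact ((((continuous_const.mul k1).mul continuous_const).mul k2).mul continuous_const).add
      ((((continuous_const.mul k3).mul continuous_const).mul k4).mul continuous_const)
  refine ext_countable hc1 hc2 hSc (fun b hb => ?_) b₀
  have hb1 : θ (b - x) ≠ 0 :=
    theta_ne τ θ hθzero (fun hmem => hb (Or.inl hmem))
  have hb2 : θ (b - y - μ) ≠ 0 :=
    theta_ne τ θ hθzero (fun hmem => hb (Or.inr hmem))
  exact generic b hb1 hb2

end Theta

end ZAux

namespace ZAux

/-- the four building blocks of a term of `Zexp` -/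
def InvP (θ : ℂ → ℂ) (hbar : ℂ) {n : ℕ} (v : Fin n → ℂ) (σ : Equiv.Perm (Fin n)) : ℂ :=
  ∏ l : Fin n, ∏ l' : Fin n,
    if l < l' ∧ σ l' < σ l then
      θ (v (σ l) - v (σ l') + hbar) / θ (v (σ l) - v (σ l') - hbar) else 1

def LP (θ : ℂ → ℂ) {n : ℕ} (u v : Fin n → ℂ) (σ : Equiv.Perm (Fin n)) : ℂ :=
  ∏ k : Fin n, ∏ m : Fin n, if k < m then θ (u k - v (σ m)) else 1

def UP (θ : ℂ → ℂ) (hbar : ℂ) {n : ℕ} (u v : Fin n → ℂ) (σ : Equiv.Perm (Fin n)) : ℂ :=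
  ∏ k : Fin n, ∏ m : Fin n, if m < k then θ (u k - v (σ m) + hbar) else 1

def DP (θ : ℂ → ℂ) (hbar lam : ℂ) {n : ℕ} (u v : Fin n → ℂ) (σ : Equiv.Perm (Fin n)) : ℂ :=
  ∏ m : Fin n, θ (u m - v (σ m) - lam - ((m : ℕ) : ℂ) * hbar) * θ hbar /
        θ (-lam - ((m : ℕ) : ℂ) * hbar)

def PrefP (θ : ℂ → ℂ) (hbar : ℂ) {n : ℕ} (v : Fin n → ℂ) : ℂ :=
  ∏ k : Fin n, ∏ m : Fin n, if m < k then θ (v k - v m - hbar) / θ (v k - v m) else 1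

lemma Zexp_eq (θ : ℂ → ℂ) (hbar lam : ℂ) (n : ℕ) (u v : Fin n → ℂ) :
    Zexp θ hbar lam n u v = PrefP θ hbar v *
      ∑ σ : Equiv.Perm (Fin n),
        InvP θ hbar v σ * LP θ u v σ * UP θ hbar u v σ * DP θ hbar lam u v σ := rfl

/-- extract two special points from a product -/
lemma prod_pair_extract {ι : Type*} [Fintype ι] [DecidableEq ι] (F G : ι → ℂ) (t₁ t₂ : ι)
    (h12 : t₁ ≠ t₂) (hFG : ∀ p, p ≠ t₁ → p ≠ t₂ → F p = G p) :
    (∏ p, F p) * (G t₁ * G t₂) = (∏ p, G p) * (F t₁ * F t₂) := by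
  classical
  have ht2 : t₂ ∈ Finset.univ.erase t₁ := Finset.mem_erase.mpr ⟨(Ne.symm h12), Finset.mem_univ t₂⟩
  have eF : ∏ p, F p = F t₁ * (F t₂ * ∏ p ∈ (Finset.univ.erase t₁).erase t₂, F p) := by
    rw [Finset.mul_prod_erase _ _ ht2, Finset.mul_prod_erase _ _ (Finset.mem_univ t₁)]
  have eG : ∏ p, G p = G t₁ * (G t₂ * ∏ p ∈ (Finset.univ.erase t₁).erase t₂, G p) := by
    rw [Finset.mul_prod_erase _ _ ht2, Finset.mul_prod_erase _ _ (Finset.mem_univ t₁)]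
  have ePr : ∏ p ∈ (Finset.univ.erase t₁).erase t₂, F p
      = ∏ p ∈ (Finset.univ.erase t₁).erase t₂, G p := by
    apply Finset.prod_congr rfl
    intro p hp
    have h1 : p ≠ t₂ := (Finset.mem_erase.mp hp).1
    have h2 : p ≠ t₁ := (Finset.mem_erase.mp (Finset.mem_erase.mp hp).2).1
    exact hFG p h2 h1
  rw [eF, eG, ePr]; ring

lemma prod2 {n : ℕ} (f : Fin n → Fin n → ℂ) :
    (∏ p : Fin n × Fin n, f p.1 p.2) = ∏ k : Fin n, ∏ m : Fin n, f k m := by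
  rw [← Finset.univ_product_univ, Finset.prod_product']

abbrev I1 {n : ℕ} (i : ℕ) (h2 : i + 1 < n) : Fin n := ⟨i, Nat.lt_of_succ_lt h2⟩
abbrev I2 {n : ℕ} (i : ℕ) (h2 : i + 1 < n) : Fin n := ⟨i + 1, h2⟩

lemma swap_val {n : ℕ} {i : ℕ} (h2 : i + 1 < n) (a : Fin n) :
    ((Equiv.swap (I1 i h2) (I2 i h2)) a).val
      = if a.val = i then i + 1 else if a.val = i + 1 then i else a.val := by
  rcases eq_or_ne a (I1 i h2) with rfl | ha1
  · rw [Equiv.swap_apply_left]; simp [I1, I2]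
  · rcases eq_or_ne a (I2 i h2) with rfl | ha2
    · rw [Equiv.swap_apply_right]; simp [I1, I2]
    · rw [Equiv.swap_apply_of_ne_of_ne ha1 ha2]
      have h1 : a.val ≠ i := fun h => ha1 (Fin.ext h)
      have h2' : a.val ≠ i + 1 := fun h => ha2 (Fin.ext h)
      simp [h1, h2']

lemma ne_I_val {n : ℕ} {i : ℕ} (h2 : i + 1 < n) (a : Fin n) (h : a ≠ I1 i h2) : a.val ≠ i :=
  fun hh => h (Fin.ext hh)

lemma ne_I2_val {n : ℕ} {i : ℕ} (h2 : i + 1 < n) (a : Fin n) (h : a ≠ I2 i h2) : a.val ≠ i + 1 :=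
  fun hh => h (Fin.ext hh)


section VSwap

variable {n : ℕ} (θ : ℂ → ℂ) (hbar : ℂ) {i : ℕ} (h2 : i + 1 < n)

lemma swap_lt_swap_iff (a b : Fin n)
    (hx : ¬(a.val = i ∧ b.val = i + 1)) (hy : ¬(a.val = i + 1 ∧ b.val = i)) :
    (Equiv.swap (I1 i h2) (I2 i h2) a < Equiv.swap (I1 i h2) (I2 i h2) b) ↔ a < b := by
  rw [Fin.lt_def, Fin.lt_def, swap_val h2, swap_val h2]
  split_ifs <;> omega

lemma PrefRel (v : Fin n → ℂ) :
    PrefP θ hbar (v ∘ Equiv.swap (I1 i h2) (I2 i h2)) *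
      (θ (v (I2 i h2) - v (I1 i h2) - hbar) / θ (v (I2 i h2) - v (I1 i h2)))
    = PrefP θ hbar v *
      (θ (v (I1 i h2) - v (I2 i h2) - hbar) / θ (v (I1 i h2) - v (I2 i h2))) := by
  classical
  set s := Equiv.swap (I1 i h2) (I2 i h2) with hs
  set F : Fin n × Fin n → ℂ := fun p =>
    if s p.2 < s p.1 then θ (v p.1 - v p.2 - hbar) / θ (v p.1 - v p.2) else 1 with hF
  set G : Fin n × Fin n → ℂ := fun p =>
    if p.2 < p.1 then θ (v p.1 - v p.2 - hbar) / θ (v p.1 - v p.2) else 1 with hG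
  have hL : PrefP θ hbar (v ∘ s) = ∏ p : Fin n × Fin n, F p := by
    rw [PrefP, ← prod2]
    rw [← Equiv.prod_comp (Equiv.prodCongr s s) F]
    apply Finset.prod_congr rfl
    intro p _
    simp only [hF, Equiv.prodCongr_apply, Equiv.coe_refl, Prod.map_fst, Prod.map_snd,
      Function.comp_apply, Equiv.swap_apply_self, hs]
  have hR : PrefP θ hbar v = ∏ p : Fin n × Fin n, G p := by
    rw [PrefP, ← prod2]
  have hne : ((I1 i h2, I2 i h2) : Fin n × Fin n) ≠ (I2 i h2, I1 i h2) := by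
    intro h
    have := congrArg Prod.fst h
    simp only [] at this
    exact absurd (congrArg Fin.val this) (by simp)
  have hFG : ∀ p : Fin n × Fin n, p ≠ (I1 i h2, I2 i h2) → p ≠ (I2 i h2, I1 i h2) → F p = G p := by
    intro p hp1 hp2
    have hx : ¬(p.2.val = i ∧ p.1.val = i + 1) := by
      rintro ⟨ha, hb⟩
      exact hp2 (Prod.ext (Fin.ext hb) (Fin.ext ha))
    have hy : ¬(p.2.val = i + 1 ∧ p.1.val = i) := by
      rintro ⟨ha, hb⟩
      exact hp1 (Prod.ext (Fin.ext hb) (Fin.ext ha))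
    have hiff : (s p.2 < s p.1) ↔ (p.2 < p.1) := swap_lt_swap_iff h2 p.2 p.1 hx hy
    simp only [hF, hG, hiff]
  have hmain := prod_pair_extract F G (I1 i h2, I2 i h2) (I2 i h2, I1 i h2) hne hFG
  have hI12 : (I1 i h2) < (I2 i h2) := by rw [Fin.lt_def]; simp
  have hnI21 : ¬((I2 i h2) < (I1 i h2)) := by rw [Fin.lt_def]; simp
  have hsw1 : s (I1 i h2) = I2 i h2 := Equiv.swap_apply_left _ _
  have hsw2 : s (I2 i h2) = I1 i h2 := Equiv.swap_apply_right _ _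
  have eG1 : G (I1 i h2, I2 i h2) = 1 := by simp only [hG]; rw [if_neg hnI21]
  have eG2 : G (I2 i h2, I1 i h2) = θ (v (I2 i h2) - v (I1 i h2) - hbar) /
      θ (v (I2 i h2) - v (I1 i h2)) := by simp only [hG]; rw [if_pos hI12]
  have eF1 : F (I1 i h2, I2 i h2) = θ (v (I1 i h2) - v (I2 i h2) - hbar) /
      θ (v (I1 i h2) - v (I2 i h2)) := by
    simp only [hF]; rw [hsw2, hsw1, if_pos hI12]
  have eF2 : F (I2 i h2, I1 i h2) = 1 := by
    simp only [hF]; rw [hsw1, hsw2, if_neg hnI21]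
  rw [eG1, eG2, eF1, eF2, one_mul, mul_one] at hmain
  rw [hL, hR]
  linear_combination hmain

lemma InvRelV (v : Fin n → ℂ) (σ : Equiv.Perm (Fin n)) :
    InvP θ hbar (v ∘ Equiv.swap (I1 i h2) (I2 i h2)) σ *
      (if σ⁻¹ (I1 i h2) < σ⁻¹ (I2 i h2) then
        θ (v (I2 i h2) - v (I1 i h2) + hbar) / θ (v (I2 i h2) - v (I1 i h2) - hbar) else 1)
    = InvP θ hbar v (Equiv.swap (I1 i h2) (I2 i h2) * σ) *
      (if σ⁻¹ (I2 i h2) < σ⁻¹ (I1 i h2) then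
        θ (v (I1 i h2) - v (I2 i h2) + hbar) / θ (v (I1 i h2) - v (I2 i h2) - hbar) else 1) := by
  classical
  set s := Equiv.swap (I1 i h2) (I2 i h2) with hs
  set ρ : Equiv.Perm (Fin n) := s * σ with hρ
  set A : Fin n := σ⁻¹ (I1 i h2) with hA
  set B : Fin n := σ⁻¹ (I2 i h2) with hB
  have hσA : σ A = I1 i h2 := Equiv.apply_symm_apply σ _
  have hσB : σ B = I2 i h2 := Equiv.apply_symm_apply σ _
  have hρA : ρ A = I2 i h2 := by
    rw [hρ, Equiv.Perm.mul_apply, hσA]; exact Equiv.swap_apply_left _ _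
  have hρB : ρ B = I1 i h2 := by
    rw [hρ, Equiv.Perm.mul_apply, hσB]; exact Equiv.swap_apply_right _ _
  have hAB : A ≠ B := by
    intro h
    have : σ A = σ B := congrArg σ h
    rw [hσA, hσB] at this
    exact absurd (congrArg Fin.val this) (by simp)
  set F : Fin n × Fin n → ℂ := fun p =>
    if p.1 < p.2 ∧ σ p.2 < σ p.1 then
      θ (v (ρ p.1) - v (ρ p.2) + hbar) / θ (v (ρ p.1) - v (ρ p.2) - hbar) else 1 with hF
  set G : Fin n × Fin n → ℂ := fun p =>
    if p.1 < p.2 ∧ ρ p.2 < ρ p.1 then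
      θ (v (ρ p.1) - v (ρ p.2) + hbar) / θ (v (ρ p.1) - v (ρ p.2) - hbar) else 1 with hG
  have hL : InvP θ hbar (v ∘ s) σ = ∏ p : Fin n × Fin n, F p := by
    rw [InvP, ← prod2]
    apply Finset.prod_congr rfl
    intro p _
    simp only [hF, Function.comp_apply, hρ, Equiv.Perm.mul_apply]
  have hR : InvP θ hbar v ρ = ∏ p : Fin n × Fin n, G p := by
    rw [InvP, ← prod2]
  have hne : ((A, B) : Fin n × Fin n) ≠ (B, A) := by
    intro h
    exact hAB (congrArg Prod.fst h)
  have hFG : ∀ p : Fin n × Fin n, p ≠ (A, B) → p ≠ (B, A) → F p = G p := by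
    intro p hp1 hp2
    have hx : ¬((σ p.2).val = i ∧ (σ p.1).val = i + 1) := by
      rintro ⟨ha, hb⟩
      apply hp2
      have e2 : p.2 = A := by
        apply σ.injective; rw [hσA]; exact Fin.ext ha
      have e1 : p.1 = B := by
        apply σ.injective; rw [hσB]; exact Fin.ext hb
      exact Prod.ext e1 e2
    have hy : ¬((σ p.2).val = i + 1 ∧ (σ p.1).val = i) := by
      rintro ⟨ha, hb⟩
      apply hp1
      have e2 : p.2 = B := by
        apply σ.injective; rw [hσB]; exact Fin.ext ha
      have e1 : p.1 = A := by
        apply σ.injective; rw [hσA]; exact Fin.ext hb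
      exact Prod.ext e1 e2
    have hiff : (ρ p.2 < ρ p.1) ↔ (σ p.2 < σ p.1) := by
      have : ρ p.2 = s (σ p.2) := by rw [hρ, Equiv.Perm.mul_apply]
      have h2'' : ρ p.1 = s (σ p.1) := by rw [hρ, Equiv.Perm.mul_apply]
      rw [this, h2'']
      exact swap_lt_swap_iff h2 (σ p.2) (σ p.1) hx hy
    simp only [hF, hG, hiff]
  have hmain := prod_pair_extract F G (A, B) (B, A) hne hFG
  have hI12 : (I1 i h2) < (I2 i h2) := by rw [Fin.lt_def]; simp
  have hnI21 : ¬((I2 i h2) < (I1 i h2)) := by rw [Fin.lt_def]; simp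
  -- corner values
  have eF_AB : F (A, B) = 1 := by
    simp only [hF]
    rw [if_neg]
    rintro ⟨-, hlt⟩
    rw [hσA, hσB] at hlt
    exact hnI21 hlt
  have eG_BA : G (B, A) = 1 := by
    simp only [hG]
    rw [if_neg]
    rintro ⟨-, hlt⟩
    rw [hρA, hρB] at hlt
    exact hnI21 hlt
  have eF_BA : F (B, A) = if B < A then
      θ (v (I1 i h2) - v (I2 i h2) + hbar) / θ (v (I1 i h2) - v (I2 i h2) - hbar) else 1 := by
    simp only [hF]
    rw [hρA, hρB, hσA, hσB]
    by_cases hba : B < A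
    · rw [if_pos ⟨hba, hI12⟩, if_pos hba]
    · rw [if_neg (fun hc => hba hc.1), if_neg hba]
  have eG_AB : G (A, B) = if A < B then
      θ (v (I2 i h2) - v (I1 i h2) + hbar) / θ (v (I2 i h2) - v (I1 i h2) - hbar) else 1 := by
    simp only [hG]
    rw [hρA, hρB]
    by_cases hab : A < B
    · rw [if_pos ⟨hab, hI12⟩, if_pos hab]
    · rw [if_neg (fun hc => hab hc.1), if_neg hab]
  rw [eF_AB, eG_BA, eF_BA, eG_AB, mul_one, one_mul] at hmain
  rw [hL, hR]
  linear_combination hmain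


lemma vswap (τ : ℂ) (hτ : 0 < τ.im) (hθdiff : Differentiable ℂ θ)
    (hθ1 : ∀ x : ℂ, θ (x + 1) = -θ x)
    (hθτ : ∀ x : ℂ, θ (x + τ) =
      -Complex.exp (-(2 * (Real.pi : ℂ) * Complex.I * x) - (Real.pi : ℂ) * Complex.I * τ) * θ x)
    (hθ0 : deriv θ 0 = 1)
    (hθzero : ∀ x : ℂ, θ x = 0 ↔ x ∈ latticeGamma τ)
    (hθsimple : ∀ x ∈ latticeGamma τ, deriv θ x ≠ 0)
    (lam : ℂ) (u v : Fin n → ℂ)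
    (hv : ∀ a b : Fin n, a ≠ b →
      v a - v b ∉ latticeGamma τ ∧ v a - v b - hbar ∉ latticeGamma τ) :
    Zexp θ hbar lam n u (v ∘ Equiv.swap (I1 i h2) (I2 i h2)) = Zexp θ hbar lam n u v := by
  classical
  have hodd := theta_odd τ θ hτ hθdiff hθ1 hθτ hθ0 hθzero hθsimple
  set s := Equiv.swap (I1 i h2) (I2 i h2) with hs
  rw [Zexp_eq, Zexp_eq, Finset.mul_sum, Finset.mul_sum]
  rw [← Equiv.sum_comp (Equiv.mulLeft s) (fun σ => PrefP θ hbar v *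
    (InvP θ hbar v σ * LP θ u v σ * UP θ hbar u v σ * DP θ hbar lam u v σ))]
  apply Finset.sum_congr rfl
  intro σ _
  simp only [Equiv.coe_mulLeft]
  have hLco : LP θ u (v ∘ s) σ = LP θ u v (s * σ) := by
    simp only [LP, Function.comp_apply, Equiv.Perm.mul_apply]
  have hUco : UP θ hbar u (v ∘ s) σ = UP θ hbar u v (s * σ) := by
    simp only [UP, Function.comp_apply, Equiv.Perm.mul_apply]
  have hDco : DP θ hbar lam u (v ∘ s) σ = DP θ hbar lam u v (s * σ) := by
    simp only [DP, Function.comp_apply, Equiv.Perm.mul_apply]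
  have hI12ne : (I1 i h2 : Fin n) ≠ I2 i h2 := by
    intro h; exact absurd (congrArg Fin.val h) (by simp)
  obtain ⟨hm1, hm2⟩ := hv (I1 i h2) (I2 i h2) hI12ne
  obtain ⟨hm3, hm4⟩ := hv (I2 i h2) (I1 i h2) hI12ne.symm
  have tX : θ (v (I1 i h2) - v (I2 i h2)) ≠ 0 := theta_ne τ θ hθzero hm1
  have tXm : θ (v (I1 i h2) - v (I2 i h2) - hbar) ≠ 0 := theta_ne τ θ hθzero hm2
  have tY : θ (v (I2 i h2) - v (I1 i h2)) ≠ 0 := theta_ne τ θ hθzero hm3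
  have tYm : θ (v (I2 i h2) - v (I1 i h2) - hbar) ≠ 0 := theta_ne τ θ hθzero hm4
  have o1 : θ (v (I2 i h2) - v (I1 i h2)) = -θ (v (I1 i h2) - v (I2 i h2)) := by
    rw [show v (I2 i h2) - v (I1 i h2) = -(v (I1 i h2) - v (I2 i h2)) by ring]; exact hodd _
  have o2 : θ (v (I2 i h2) - v (I1 i h2) + hbar)
      = -θ (v (I1 i h2) - v (I2 i h2) - hbar) := by
    rw [show v (I2 i h2) - v (I1 i h2) + hbar = -(v (I1 i h2) - v (I2 i h2) - hbar) by ring]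
    exact hodd _
  have o3 : θ (v (I1 i h2) - v (I2 i h2) + hbar)
      = -θ (v (I2 i h2) - v (I1 i h2) - hbar) := by
    rw [show v (I1 i h2) - v (I2 i h2) + hbar = -(v (I2 i h2) - v (I1 i h2) - hbar) by ring]
    exact hodd _
  have tYp : θ (v (I2 i h2) - v (I1 i h2) + hbar) ≠ 0 := by
    rw [o2]; exact neg_ne_zero.mpr tXm
  have tXp : θ (v (I1 i h2) - v (I2 i h2) + hbar) ≠ 0 := by
    rw [o3]; exact neg_ne_zero.mpr tYm
  have hPR := PrefRel θ hbar h2 v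
  have hIR := InvRelV θ hbar h2 v σ
  have e1 : PrefP θ hbar (v ∘ s) * θ (v (I2 i h2) - v (I1 i h2) - hbar)
        * θ (v (I1 i h2) - v (I2 i h2))
      = PrefP θ hbar v * θ (v (I1 i h2) - v (I2 i h2) - hbar)
        * θ (v (I2 i h2) - v (I1 i h2)) := by
    have h := hPR
    field_simp at h
    linear_combination h
  have hPI : PrefP θ hbar (v ∘ s) * InvP θ hbar (v ∘ s) σ
      = PrefP θ hbar v * InvP θ hbar v (s * σ) := by
    rcases lt_trichotomy (σ⁻¹ (I1 i h2)) (σ⁻¹ (I2 i h2)) with hAB | hAB | hAB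
    · have hnBA : ¬(σ⁻¹ (I2 i h2) < σ⁻¹ (I1 i h2)) := fun h => absurd (h.trans hAB) (lt_irrefl _)
      rw [if_pos hAB, if_neg hnBA, mul_one] at hIR
      have e2 : InvP θ hbar (v ∘ s) σ * θ (v (I2 i h2) - v (I1 i h2) + hbar)
          = InvP θ hbar v (s * σ) * θ (v (I2 i h2) - v (I1 i h2) - hbar) := by
        have h := hIR
        field_simp at h
        linear_combination h
      have e4 : (PrefP θ hbar (v ∘ s) * θ (v (I2 i h2) - v (I1 i h2) - hbar)
            * θ (v (I1 i h2) - v (I2 i h2)))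
          * (InvP θ hbar (v ∘ s) σ * θ (v (I2 i h2) - v (I1 i h2) + hbar))
          = (PrefP θ hbar v * θ (v (I1 i h2) - v (I2 i h2) - hbar)
            * θ (v (I2 i h2) - v (I1 i h2)))
          * (InvP θ hbar v (s * σ) * θ (v (I2 i h2) - v (I1 i h2) - hbar)) := by
        rw [e1, e2]
      have e3 : (PrefP θ hbar (v ∘ s) * InvP θ hbar (v ∘ s) σ)
            * (θ (v (I1 i h2) - v (I2 i h2)) * θ (v (I2 i h2) - v (I1 i h2) + hbar)
              * θ (v (I2 i h2) - v (I1 i h2) - hbar))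
          = (PrefP θ hbar v * InvP θ hbar v (s * σ))
            * (θ (v (I1 i h2) - v (I2 i h2)) * θ (v (I2 i h2) - v (I1 i h2) + hbar)
              * θ (v (I2 i h2) - v (I1 i h2) - hbar)) := by
        linear_combination e4
          + (PrefP θ hbar v * InvP θ hbar v (s * σ) * θ (v (I2 i h2) - v (I1 i h2) - hbar)
              * θ (v (I1 i h2) - v (I2 i h2) - hbar)) * o1
          - (PrefP θ hbar v * InvP θ hbar v (s * σ) * θ (v (I2 i h2) - v (I1 i h2) - hbar)
              * θ (v (I1 i h2) - v (I2 i h2))) * o2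
      exact mul_right_cancel₀ (mul_ne_zero (mul_ne_zero tX tYp) tYm) e3
    · exact absurd (σ⁻¹.injective hAB) hI12ne
    · have hnAB : ¬(σ⁻¹ (I1 i h2) < σ⁻¹ (I2 i h2)) := fun h => absurd (h.trans hAB) (lt_irrefl _)
      rw [if_pos hAB, if_neg hnAB, mul_one] at hIR
      have e2 : InvP θ hbar (v ∘ s) σ * θ (v (I1 i h2) - v (I2 i h2) - hbar)
          = InvP θ hbar v (s * σ) * θ (v (I1 i h2) - v (I2 i h2) + hbar) := by
        have h := hIR
        field_simp at h
        linear_combination h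
      have e4 : (PrefP θ hbar (v ∘ s) * θ (v (I2 i h2) - v (I1 i h2) - hbar)
            * θ (v (I1 i h2) - v (I2 i h2)))
          * (InvP θ hbar (v ∘ s) σ * θ (v (I1 i h2) - v (I2 i h2) - hbar))
          = (PrefP θ hbar v * θ (v (I1 i h2) - v (I2 i h2) - hbar)
            * θ (v (I2 i h2) - v (I1 i h2)))
          * (InvP θ hbar v (s * σ) * θ (v (I1 i h2) - v (I2 i h2) + hbar)) := by
        rw [e1, e2]
      have e3 : (PrefP θ hbar (v ∘ s) * InvP θ hbar (v ∘ s) σ)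
            * (θ (v (I1 i h2) - v (I2 i h2)) * θ (v (I1 i h2) - v (I2 i h2) - hbar)
              * θ (v (I2 i h2) - v (I1 i h2) - hbar))
          = (PrefP θ hbar v * InvP θ hbar v (s * σ))
            * (θ (v (I1 i h2) - v (I2 i h2)) * θ (v (I1 i h2) - v (I2 i h2) - hbar)
              * θ (v (I2 i h2) - v (I1 i h2) - hbar)) := by
        linear_combination e4
          + (PrefP θ hbar v * InvP θ hbar v (s * σ) * θ (v (I1 i h2) - v (I2 i h2) - hbar)
              * θ (v (I1 i h2) - v (I2 i h2) + hbar)) * o1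
          - (PrefP θ hbar v * InvP θ hbar v (s * σ) * θ (v (I1 i h2) - v (I2 i h2) - hbar)
              * θ (v (I1 i h2) - v (I2 i h2))) * o3
      exact mul_right_cancel₀ (mul_ne_zero (mul_ne_zero tX tXm) tYm) e3
  rw [hLco, hUco, hDco]
  linear_combination (LP θ u v (s * σ) * UP θ hbar u v (s * σ) * DP θ hbar lam u v (s * σ)) * hPI

end VSwap

section USwap

variable {n : ℕ} (θ : ℂ → ℂ) (hbar lam : ℂ) {i : ℕ} (h2 : i + 1 < n)

lemma lt_swap_iff (a b : Fin n) (h : ¬(a.val = i ∧ (b.val = i ∨ b.val = i + 1))) :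
    (a < Equiv.swap (I1 i h2) (I2 i h2) b) ↔ a < b := by
  rw [Fin.lt_def, Fin.lt_def, swap_val h2]
  split_ifs <;> omega

lemma swap_lt_iff (a b : Fin n) (h : ¬(b.val = i + 1 ∧ (a.val = i ∨ a.val = i + 1))) :
    (Equiv.swap (I1 i h2) (I2 i h2) a < b) ↔ a < b := by
  rw [Fin.lt_def, Fin.lt_def, swap_val h2]
  split_ifs <;> omega

lemma hI12lt : (I1 i h2 : Fin n) < I2 i h2 := by rw [Fin.lt_def]; simp

lemma hI21nlt : ¬((I2 i h2 : Fin n) < I1 i h2) := by rw [Fin.lt_def]; simp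

/-- L-product, permutation side -/
lemma lemA (u' v : Fin n → ℂ) (σ : Equiv.Perm (Fin n)) :
    LP θ u' v (σ * Equiv.swap (I1 i h2) (I2 i h2)) * θ (u' (I1 i h2) - v (σ (I2 i h2)))
      = LP θ u' v σ * θ (u' (I1 i h2) - v (σ (I1 i h2))) := by
  classical
  set s := Equiv.swap (I1 i h2) (I2 i h2) with hs
  set F : Fin n × Fin n → ℂ := fun p =>
    if p.1 < s p.2 then θ (u' p.1 - v (σ p.2)) else 1 with hF
  set G : Fin n × Fin n → ℂ := fun p =>
    if p.1 < p.2 then θ (u' p.1 - v (σ p.2)) else 1 with hG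
  have hL : LP θ u' v (σ * s) = ∏ p : Fin n × Fin n, F p := by
    rw [LP, ← prod2]
    rw [← Equiv.prod_comp (Equiv.prodCongr (Equiv.refl (Fin n)) s) F]
    apply Finset.prod_congr rfl
    intro p _
    simp only [hF, Equiv.prodCongr_apply, Equiv.coe_refl, Prod.map_fst, Prod.map_snd, id_eq,
      Equiv.swap_apply_self, Equiv.Perm.mul_apply, hs]
  have hR : LP θ u' v σ = ∏ p : Fin n × Fin n, G p := by rw [LP, ← prod2]
  have hne : ((I1 i h2, I1 i h2) : Fin n × Fin n) ≠ (I1 i h2, I2 i h2) := by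
    intro h
    have := congrArg (fun p : Fin n × Fin n => (p.2 : Fin n).val) h
    simp at this
  have hFG : ∀ p : Fin n × Fin n, p ≠ (I1 i h2, I1 i h2) → p ≠ (I1 i h2, I2 i h2) → F p = G p := by
    intro p hp1 hp2
    have hcond : ¬(p.1.val = i ∧ (p.2.val = i ∨ p.2.val = i + 1)) := by
      rintro ⟨ha, hb | hb⟩
      · exact hp1 (Prod.ext (Fin.ext ha) (Fin.ext hb))
      · exact hp2 (Prod.ext (Fin.ext ha) (Fin.ext hb))
    have hiff := lt_swap_iff h2 p.1 p.2 hcond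
    simp only [hF, hG, hs, hiff]
  have hmain := prod_pair_extract F G (I1 i h2, I1 i h2) (I1 i h2, I2 i h2) hne hFG
  have eG1 : G (I1 i h2, I1 i h2) = 1 := by
    simp only [hG]; rw [if_neg (lt_irrefl _)]
  have eG2 : G (I1 i h2, I2 i h2) = θ (u' (I1 i h2) - v (σ (I2 i h2))) := by
    simp only [hG]; rw [if_pos (hI12lt h2)]
  have eF1 : F (I1 i h2, I1 i h2) = θ (u' (I1 i h2) - v (σ (I1 i h2))) := by
    simp only [hF]
    rw [Equiv.swap_apply_left, if_pos (hI12lt h2)]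
  have eF2 : F (I1 i h2, I2 i h2) = 1 := by
    simp only [hF]
    rw [Equiv.swap_apply_right, if_neg (lt_irrefl _)]
  rw [eG1, eG2, eF1, eF2, one_mul, mul_one] at hmain
  rw [hL, hR]
  linear_combination hmain

/-- L-product, u side -/
lemma lemB (u' v : Fin n → ℂ) (σ : Equiv.Perm (Fin n)) :
    LP θ (u' ∘ Equiv.swap (I1 i h2) (I2 i h2)) v σ * θ (u' (I1 i h2) - v (σ (I2 i h2)))
      = LP θ u' v σ * θ (u' (I2 i h2) - v (σ (I2 i h2))) := by
  classical
  set s := Equiv.swap (I1 i h2) (I2 i h2) with hs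
  set F : Fin n × Fin n → ℂ := fun p =>
    if s p.1 < p.2 then θ (u' p.1 - v (σ p.2)) else 1 with hF
  set G : Fin n × Fin n → ℂ := fun p =>
    if p.1 < p.2 then θ (u' p.1 - v (σ p.2)) else 1 with hG
  have hL : LP θ (u' ∘ s) v σ = ∏ p : Fin n × Fin n, F p := by
    rw [LP, ← prod2]
    rw [← Equiv.prod_comp (Equiv.prodCongr s (Equiv.refl (Fin n))) F]
    apply Finset.prod_congr rfl
    intro p _
    simp only [hF, Equiv.prodCongr_apply, Equiv.coe_refl, Prod.map_fst, Prod.map_snd, id_eq,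
      Equiv.swap_apply_self, Function.comp_apply, hs]
  have hR : LP θ u' v σ = ∏ p : Fin n × Fin n, G p := by rw [LP, ← prod2]
  have hne : ((I1 i h2, I2 i h2) : Fin n × Fin n) ≠ (I2 i h2, I2 i h2) := by
    intro h
    have := congrArg (fun p : Fin n × Fin n => (p.1 : Fin n).val) h
    simp at this
  have hFG : ∀ p : Fin n × Fin n, p ≠ (I1 i h2, I2 i h2) → p ≠ (I2 i h2, I2 i h2) → F p = G p := by
    intro p hp1 hp2
    have hcond : ¬(p.2.val = i + 1 ∧ (p.1.val = i ∨ p.1.val = i + 1)) := by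
      rintro ⟨hb, ha | ha⟩
      · exact hp1 (Prod.ext (Fin.ext ha) (Fin.ext hb))
      · exact hp2 (Prod.ext (Fin.ext ha) (Fin.ext hb))
    have hiff := swap_lt_iff h2 p.1 p.2 hcond
    simp only [hF, hG, hs, hiff]
  have hmain := prod_pair_extract F G (I1 i h2, I2 i h2) (I2 i h2, I2 i h2) hne hFG
  have eG1 : G (I1 i h2, I2 i h2) = θ (u' (I1 i h2) - v (σ (I2 i h2))) := by
    simp only [hG]; rw [if_pos (hI12lt h2)]
  have eG2 : G (I2 i h2, I2 i h2) = 1 := by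
    simp only [hG]; rw [if_neg (lt_irrefl _)]
  have eF1 : F (I1 i h2, I2 i h2) = 1 := by
    simp only [hF]
    rw [Equiv.swap_apply_left, if_neg (lt_irrefl _)]
  have eF2 : F (I2 i h2, I2 i h2) = θ (u' (I2 i h2) - v (σ (I2 i h2))) := by
    simp only [hF]
    rw [Equiv.swap_apply_right, if_pos (hI12lt h2)]
  rw [eG1, eG2, eF1, eF2, one_mul, mul_one] at hmain
  rw [hL, hR]
  linear_combination hmain

/-- U-product, permutation side -/
lemma lemA' (u' v : Fin n → ℂ) (σ : Equiv.Perm (Fin n)) :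
    UP θ hbar u' v (σ * Equiv.swap (I1 i h2) (I2 i h2)) * θ (u' (I2 i h2) - v (σ (I1 i h2)) + hbar)
      = UP θ hbar u' v σ * θ (u' (I2 i h2) - v (σ (I2 i h2)) + hbar) := by
  classical
  set s := Equiv.swap (I1 i h2) (I2 i h2) with hs
  set F : Fin n × Fin n → ℂ := fun p =>
    if s p.2 < p.1 then θ (u' p.1 - v (σ p.2) + hbar) else 1 with hF
  set G : Fin n × Fin n → ℂ := fun p =>
    if p.2 < p.1 then θ (u' p.1 - v (σ p.2) + hbar) else 1 with hG
  have hL : UP θ hbar u' v (σ * s) = ∏ p : Fin n × Fin n, F p := by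
    rw [UP, ← prod2]
    rw [← Equiv.prod_comp (Equiv.prodCongr (Equiv.refl (Fin n)) s) F]
    apply Finset.prod_congr rfl
    intro p _
    simp only [hF, Equiv.prodCongr_apply, Equiv.coe_refl, Prod.map_fst, Prod.map_snd, id_eq,
      Equiv.swap_apply_self, Equiv.Perm.mul_apply, hs]
  have hR : UP θ hbar u' v σ = ∏ p : Fin n × Fin n, G p := by rw [UP, ← prod2]
  have hne : ((I2 i h2, I1 i h2) : Fin n × Fin n) ≠ (I2 i h2, I2 i h2) := by
    intro h
    have := congrArg (fun p : Fin n × Fin n => (p.2 : Fin n).val) h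
    simp at this
  have hFG : ∀ p : Fin n × Fin n, p ≠ (I2 i h2, I1 i h2) → p ≠ (I2 i h2, I2 i h2) → F p = G p := by
    intro p hp1 hp2
    have hcond : ¬(p.1.val = i + 1 ∧ (p.2.val = i ∨ p.2.val = i + 1)) := by
      rintro ⟨ha, hb | hb⟩
      · exact hp1 (Prod.ext (Fin.ext ha) (Fin.ext hb))
      · exact hp2 (Prod.ext (Fin.ext ha) (Fin.ext hb))
    have hiff := swap_lt_iff h2 p.2 p.1 hcond
    simp only [hF, hG, hs, hiff]
  have hmain := prod_pair_extract F G (I2 i h2, I1 i h2) (I2 i h2, I2 i h2) hne hFG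
  have eG1 : G (I2 i h2, I1 i h2) = θ (u' (I2 i h2) - v (σ (I1 i h2)) + hbar) := by
    simp only [hG]; rw [if_pos (hI12lt h2)]
  have eG2 : G (I2 i h2, I2 i h2) = 1 := by
    simp only [hG]; rw [if_neg (lt_irrefl _)]
  have eF1 : F (I2 i h2, I1 i h2) = 1 := by
    simp only [hF]
    rw [Equiv.swap_apply_left, if_neg (lt_irrefl _)]
  have eF2 : F (I2 i h2, I2 i h2) = θ (u' (I2 i h2) - v (σ (I2 i h2)) + hbar) := by
    simp only [hF]
    rw [Equiv.swap_apply_right, if_pos (hI12lt h2)]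
  rw [eG1, eG2, eF1, eF2, one_mul, mul_one] at hmain
  rw [hL, hR]
  linear_combination hmain

/-- U-product, u side -/
lemma lemB' (u' v : Fin n → ℂ) (σ : Equiv.Perm (Fin n)) :
    UP θ hbar (u' ∘ Equiv.swap (I1 i h2) (I2 i h2)) v σ * θ (u' (I2 i h2) - v (σ (I1 i h2)) + hbar)
      = UP θ hbar u' v σ * θ (u' (I1 i h2) - v (σ (I1 i h2)) + hbar) := by
  classical
  set s := Equiv.swap (I1 i h2) (I2 i h2) with hs
  set F : Fin n × Fin n → ℂ := fun p =>
    if p.2 < s p.1 then θ (u' p.1 - v (σ p.2) + hbar) else 1 with hF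
  set G : Fin n × Fin n → ℂ := fun p =>
    if p.2 < p.1 then θ (u' p.1 - v (σ p.2) + hbar) else 1 with hG
  have hL : UP θ hbar (u' ∘ s) v σ = ∏ p : Fin n × Fin n, F p := by
    rw [UP, ← prod2]
    rw [← Equiv.prod_comp (Equiv.prodCongr s (Equiv.refl (Fin n))) F]
    apply Finset.prod_congr rfl
    intro p _
    simp only [hF, Equiv.prodCongr_apply, Equiv.coe_refl, Prod.map_fst, Prod.map_snd, id_eq,
      Equiv.swap_apply_self, Function.comp_apply, hs]
  have hR : UP θ hbar u' v σ = ∏ p : Fin n × Fin n, G p := by rw [UP, ← prod2]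
  have hne : ((I1 i h2, I1 i h2) : Fin n × Fin n) ≠ (I2 i h2, I1 i h2) := by
    intro h
    have := congrArg (fun p : Fin n × Fin n => (p.1 : Fin n).val) h
    simp at this
  have hFG : ∀ p : Fin n × Fin n, p ≠ (I1 i h2, I1 i h2) → p ≠ (I2 i h2, I1 i h2) → F p = G p := by
    intro p hp1 hp2
    have hcond : ¬(p.2.val = i ∧ (p.1.val = i ∨ p.1.val = i + 1)) := by
      rintro ⟨hb, ha | ha⟩
      · exact hp1 (Prod.ext (Fin.ext ha) (Fin.ext hb))
      · exact hp2 (Prod.ext (Fin.ext ha) (Fin.ext hb))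
    have hiff := lt_swap_iff h2 p.2 p.1 hcond
    simp only [hF, hG, hs, hiff]
  have hmain := prod_pair_extract F G (I1 i h2, I1 i h2) (I2 i h2, I1 i h2) hne hFG
  have eG1 : G (I1 i h2, I1 i h2) = 1 := by
    simp only [hG]; rw [if_neg (lt_irrefl _)]
  have eG2 : G (I2 i h2, I1 i h2) = θ (u' (I2 i h2) - v (σ (I1 i h2)) + hbar) := by
    simp only [hG]; rw [if_pos (hI12lt h2)]
  have eF1 : F (I1 i h2, I1 i h2) = θ (u' (I1 i h2) - v (σ (I1 i h2)) + hbar) := by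
    simp only [hF]
    rw [Equiv.swap_apply_left, if_pos (hI12lt h2)]
  have eF2 : F (I2 i h2, I1 i h2) = 1 := by
    simp only [hF]
    rw [Equiv.swap_apply_right, if_neg (lt_irrefl _)]
  rw [eG1, eG2, eF1, eF2, one_mul, mul_one] at hmain
  rw [hL, hR]
  linear_combination hmain

/-- Inversion product under position swap -/
lemma InvRelU (v : Fin n → ℂ) (σ : Equiv.Perm (Fin n)) :
    InvP θ hbar v (σ * Equiv.swap (I1 i h2) (I2 i h2)) *
      (if σ (I2 i h2) < σ (I1 i h2) then
        θ (v (σ (I1 i h2)) - v (σ (I2 i h2)) + hbar)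
          / θ (v (σ (I1 i h2)) - v (σ (I2 i h2)) - hbar) else 1)
    = InvP θ hbar v σ *
      (if σ (I1 i h2) < σ (I2 i h2) then
        θ (v (σ (I2 i h2)) - v (σ (I1 i h2)) + hbar)
          / θ (v (σ (I2 i h2)) - v (σ (I1 i h2)) - hbar) else 1) := by
  classical
  set s := Equiv.swap (I1 i h2) (I2 i h2) with hs
  set F : Fin n × Fin n → ℂ := fun p =>
    if s p.1 < s p.2 ∧ σ p.2 < σ p.1 then
      θ (v (σ p.1) - v (σ p.2) + hbar) / θ (v (σ p.1) - v (σ p.2) - hbar) else 1 with hF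
  set G : Fin n × Fin n → ℂ := fun p =>
    if p.1 < p.2 ∧ σ p.2 < σ p.1 then
      θ (v (σ p.1) - v (σ p.2) + hbar) / θ (v (σ p.1) - v (σ p.2) - hbar) else 1 with hG
  have hL : InvP θ hbar v (σ * s) = ∏ p : Fin n × Fin n, F p := by
    rw [InvP, ← prod2]
    rw [← Equiv.prod_comp (Equiv.prodCongr s s) F]
    apply Finset.prod_congr rfl
    intro p _
    simp only [hF, Equiv.prodCongr_apply, Equiv.coe_refl, Prod.map_fst, Prod.map_snd,
      Equiv.swap_apply_self, Equiv.Perm.mul_apply, hs]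
  have hR : InvP θ hbar v σ = ∏ p : Fin n × Fin n, G p := by rw [InvP, ← prod2]
  have hne : ((I1 i h2, I2 i h2) : Fin n × Fin n) ≠ (I2 i h2, I1 i h2) := by
    intro h
    have := congrArg (fun p : Fin n × Fin n => (p.1 : Fin n).val) h
    simp at this
  have hFG : ∀ p : Fin n × Fin n, p ≠ (I1 i h2, I2 i h2) → p ≠ (I2 i h2, I1 i h2) → F p = G p := by
    intro p hp1 hp2
    have hx : ¬(p.1.val = i ∧ p.2.val = i + 1) := by
      rintro ⟨ha, hb⟩; exact hp1 (Prod.ext (Fin.ext ha) (Fin.ext hb))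
    have hy : ¬(p.1.val = i + 1 ∧ p.2.val = i) := by
      rintro ⟨ha, hb⟩; exact hp2 (Prod.ext (Fin.ext ha) (Fin.ext hb))
    have hiff : (s p.1 < s p.2) ↔ (p.1 < p.2) := swap_lt_swap_iff h2 p.1 p.2 hx hy
    simp only [hF, hG, hiff]
  have hmain := prod_pair_extract F G (I1 i h2, I2 i h2) (I2 i h2, I1 i h2) hne hFG
  have eF1 : F (I1 i h2, I2 i h2) = 1 := by
    simp only [hF]
    rw [Equiv.swap_apply_left, Equiv.swap_apply_right, if_neg]
    rintro ⟨hlt, -⟩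
    exact (hI21nlt h2) hlt
  have eG2 : G (I2 i h2, I1 i h2) = 1 := by
    simp only [hG]
    rw [if_neg]
    rintro ⟨hlt, -⟩
    exact (hI21nlt h2) hlt
  have eF2 : F (I2 i h2, I1 i h2) = if σ (I1 i h2) < σ (I2 i h2) then
      θ (v (σ (I2 i h2)) - v (σ (I1 i h2)) + hbar)
        / θ (v (σ (I2 i h2)) - v (σ (I1 i h2)) - hbar) else 1 := by
    simp only [hF]
    rw [Equiv.swap_apply_left, Equiv.swap_apply_right]
    by_cases hc : σ (I1 i h2) < σ (I2 i h2)
    · rw [if_pos ⟨hI12lt h2, hc⟩, if_pos hc]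
    · rw [if_neg (fun hcc => hc hcc.2), if_neg hc]
  have eG1 : G (I1 i h2, I2 i h2) = if σ (I2 i h2) < σ (I1 i h2) then
      θ (v (σ (I1 i h2)) - v (σ (I2 i h2)) + hbar)
        / θ (v (σ (I1 i h2)) - v (σ (I2 i h2)) - hbar) else 1 := by
    simp only [hG]
    by_cases hc : σ (I2 i h2) < σ (I1 i h2)
    · rw [if_pos ⟨hI12lt h2, hc⟩, if_pos hc]
    · rw [if_neg (fun hcc => hc hcc.2), if_neg hc]
  rw [eF1, eG2, eF2, eG1, mul_one] at hmain
  rw [hL, hR]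
  linear_combination hmain

/-- Diagonal product: extraction of the two special factors -/
lemma DPsplit (u' v : Fin n → ℂ) (ρ : Equiv.Perm (Fin n)) :
    DP θ hbar lam u' v ρ =
      (θ (u' (I1 i h2) - v (ρ (I1 i h2)) - lam - (i:ℂ) * hbar) * θ hbar
          / θ (-lam - (i:ℂ) * hbar)) *
      ((θ (u' (I2 i h2) - v (ρ (I2 i h2)) - lam - ((i:ℂ)+1) * hbar) * θ hbar
          / θ (-lam - ((i:ℂ)+1) * hbar)) *
        ∏ m ∈ (Finset.univ.erase (I1 i h2)).erase (I2 i h2),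
          θ (u' m - v (ρ m) - lam - ((m : ℕ) : ℂ) * hbar) * θ hbar
            / θ (-lam - ((m : ℕ) : ℂ) * hbar)) := by
  classical
  have ht2 : (I2 i h2) ∈ Finset.univ.erase (I1 i h2) := by
    rw [Finset.mem_erase]
    refine ⟨?_, Finset.mem_univ _⟩
    intro h
    exact absurd (congrArg Fin.val h) (by simp)
  rw [DP, ← Finset.mul_prod_erase Finset.univ _ (Finset.mem_univ (I1 i h2)),
    ← Finset.mul_prod_erase _ _ ht2]
  have c1 : (((I1 i h2 : Fin n) : ℕ) : ℂ) = (i : ℂ) := rfl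
  have c2 : (((I2 i h2 : Fin n) : ℕ) : ℂ) = ((i : ℂ) + 1) := by
    show ((i + 1 : ℕ) : ℂ) = (i : ℂ) + 1
    push_cast; ring
  rw [c1, c2]


lemma uswap_key (τ : ℂ) (hτ : 0 < τ.im) (hθdiff : Differentiable ℂ θ)
    (hθ1 : ∀ x : ℂ, θ (x + 1) = -θ x)
    (hθτ : ∀ x : ℂ, θ (x + τ) =
      -Complex.exp (-(2 * (Real.pi : ℂ) * Complex.I * x) - (Real.pi : ℂ) * Complex.I * τ) * θ x)
    (hθ0 : deriv θ 0 = 1)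
    (hθzero : ∀ x : ℂ, θ x = 0 ↔ x ∈ latticeGamma τ)
    (hθsimple : ∀ x ∈ latticeGamma τ, deriv θ x ≠ 0)
    (u v : Fin n → ℂ)
    (hv : ∀ a b : Fin n, a ≠ b →
      v a - v b ∉ latticeGamma τ ∧ v a - v b - hbar ∉ latticeGamma τ)
    (hu : ∀ j : Fin n, θ (u (I1 i h2) - v j) ≠ 0 ∧ θ (u (I1 i h2) - v j + hbar) ≠ 0
        ∧ θ (u (I2 i h2) - v j) ≠ 0 ∧ θ (u (I2 i h2) - v j + hbar) ≠ 0)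
    (σ : Equiv.Perm (Fin n)) (hσ : σ (I1 i h2) < σ (I2 i h2)) :
    InvP θ hbar v σ * LP θ (u ∘ Equiv.swap (I1 i h2) (I2 i h2)) v σ
        * UP θ hbar (u ∘ Equiv.swap (I1 i h2) (I2 i h2)) v σ
        * DP θ hbar lam (u ∘ Equiv.swap (I1 i h2) (I2 i h2)) v σ
      + InvP θ hbar v (σ * Equiv.swap (I1 i h2) (I2 i h2))
        * LP θ (u ∘ Equiv.swap (I1 i h2) (I2 i h2)) v (σ * Equiv.swap (I1 i h2) (I2 i h2))
        * UP θ hbar (u ∘ Equiv.swap (I1 i h2) (I2 i h2)) v (σ * Equiv.swap (I1 i h2) (I2 i h2))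
        * DP θ hbar lam (u ∘ Equiv.swap (I1 i h2) (I2 i h2)) v
            (σ * Equiv.swap (I1 i h2) (I2 i h2))
    = InvP θ hbar v σ * LP θ u v σ * UP θ hbar u v σ * DP θ hbar lam u v σ
      + InvP θ hbar v (σ * Equiv.swap (I1 i h2) (I2 i h2))
        * LP θ u v (σ * Equiv.swap (I1 i h2) (I2 i h2))
        * UP θ hbar u v (σ * Equiv.swap (I1 i h2) (I2 i h2))
        * DP θ hbar lam u v (σ * Equiv.swap (I1 i h2) (I2 i h2)) := by
  classical
  set s := Equiv.swap (I1 i h2) (I2 i h2) with hs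
  have hsI1 : s (I1 i h2) = I2 i h2 := Equiv.swap_apply_left _ _
  have hsI2 : s (I2 i h2) = I1 i h2 := Equiv.swap_apply_right _ _
  have hus1 : (u ∘ s) (I1 i h2) = u (I2 i h2) := by rw [Function.comp_apply, hsI1]
  have hus2 : (u ∘ s) (I2 i h2) = u (I1 i h2) := by rw [Function.comp_apply, hsI2]
  have hσs1 : (σ * s) (I1 i h2) = σ (I2 i h2) := by rw [Equiv.Perm.mul_apply, hsI1]
  have hσs2 : (σ * s) (I2 i h2) = σ (I1 i h2) := by rw [Equiv.Perm.mul_apply, hsI2]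
  -- core equalities
  have hcoreA : (∏ m ∈ (Finset.univ.erase (I1 i h2)).erase (I2 i h2),
        θ ((u ∘ s) m - v (σ m) - lam - ((m : ℕ) : ℂ) * hbar) * θ hbar
          / θ (-lam - ((m : ℕ) : ℂ) * hbar))
      = ∏ m ∈ (Finset.univ.erase (I1 i h2)).erase (I2 i h2),
        θ (u m - v (σ m) - lam - ((m : ℕ) : ℂ) * hbar) * θ hbar
          / θ (-lam - ((m : ℕ) : ℂ) * hbar) := by
    apply Finset.prod_congr rfl
    intro m hm
    have hm2 : m ≠ I2 i h2 := (Finset.mem_erase.mp hm).1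
    have hm1 : m ≠ I1 i h2 := (Finset.mem_erase.mp (Finset.mem_erase.mp hm).2).1
    rw [Function.comp_apply, hs, Equiv.swap_apply_of_ne_of_ne hm1 hm2]
  have hcoreB : (∏ m ∈ (Finset.univ.erase (I1 i h2)).erase (I2 i h2),
        θ (u m - v ((σ * s) m) - lam - ((m : ℕ) : ℂ) * hbar) * θ hbar
          / θ (-lam - ((m : ℕ) : ℂ) * hbar))
      = ∏ m ∈ (Finset.univ.erase (I1 i h2)).erase (I2 i h2),
        θ (u m - v (σ m) - lam - ((m : ℕ) : ℂ) * hbar) * θ hbar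
          / θ (-lam - ((m : ℕ) : ℂ) * hbar) := by
    apply Finset.prod_congr rfl
    intro m hm
    have hm2 : m ≠ I2 i h2 := (Finset.mem_erase.mp hm).1
    have hm1 : m ≠ I1 i h2 := (Finset.mem_erase.mp (Finset.mem_erase.mp hm).2).1
    rw [Equiv.Perm.mul_apply, hs, Equiv.swap_apply_of_ne_of_ne hm1 hm2]
  have hcoreC : (∏ m ∈ (Finset.univ.erase (I1 i h2)).erase (I2 i h2),
        θ ((u ∘ s) m - v ((σ * s) m) - lam - ((m : ℕ) : ℂ) * hbar) * θ hbar
          / θ (-lam - ((m : ℕ) : ℂ) * hbar))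
      = ∏ m ∈ (Finset.univ.erase (I1 i h2)).erase (I2 i h2),
        θ (u m - v (σ m) - lam - ((m : ℕ) : ℂ) * hbar) * θ hbar
          / θ (-lam - ((m : ℕ) : ℂ) * hbar) := by
    apply Finset.prod_congr rfl
    intro m hm
    have hm2 : m ≠ I2 i h2 := (Finset.mem_erase.mp hm).1
    have hm1 : m ≠ I1 i h2 := (Finset.mem_erase.mp (Finset.mem_erase.mp hm).2).1
    rw [Function.comp_apply, Equiv.Perm.mul_apply, hs, Equiv.swap_apply_of_ne_of_ne hm1 hm2]
  rw [DPsplit θ hbar lam h2 (u ∘ s) v σ, DPsplit θ hbar lam h2 (u ∘ s) v (σ * s),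
    DPsplit θ hbar lam h2 u v σ, DPsplit θ hbar lam h2 u v (σ * s),
    hcoreA, hcoreB, hcoreC, hus1, hus2, hσs1, hσs2]
  -- relations
  have E1 := lemA θ h2 u v σ
  have E2 := lemB θ h2 u v σ
  have E3 := lemA θ h2 (u ∘ s) v σ
  rw [hus1] at E3
  have E4 := lemA' θ hbar h2 u v σ
  have E5 := lemB' θ hbar h2 u v σ
  have E6 := lemA' θ hbar h2 (u ∘ s) v σ
  rw [hus2] at E6
  have E7 := InvRelU θ hbar h2 v σ
  have hnσ : ¬(σ (I2 i h2) < σ (I1 i h2)) := fun h => absurd (h.trans hσ) (lt_irrefl _)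
  rw [if_pos hσ, if_neg hnσ, mul_one] at E7
  -- nonvanishing
  have hσne : σ (I2 i h2) ≠ σ (I1 i h2) := fun h =>
    absurd (σ.injective h) (fun hh => absurd (congrArg Fin.val hh) (by simp))
  have twm : θ (v (σ (I2 i h2)) - v (σ (I1 i h2)) - hbar) ≠ 0 :=
    theta_ne τ θ hθzero (hv _ _ hσne).2
  have tay : θ (u (I1 i h2) - v (σ (I2 i h2))) ≠ 0 := (hu _).1
  have tby : θ (u (I2 i h2) - v (σ (I2 i h2))) ≠ 0 := (hu _).2.2.1
  have tbxh : θ (u (I2 i h2) - v (σ (I1 i h2)) + hbar) ≠ 0 := (hu _).2.2.2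
  have taxh : θ (u (I1 i h2) - v (σ (I1 i h2)) + hbar) ≠ 0 := (hu _).2.1
  have E7' : InvP θ hbar v (σ * s) * θ (v (σ (I2 i h2)) - v (σ (I1 i h2)) - hbar)
      = InvP θ hbar v σ * θ (v (σ (I2 i h2)) - v (σ (I1 i h2)) + hbar) := by
    rw [E7]; field_simp
  -- exchange identity instance
  have hE := theta_exchange τ θ hτ hθdiff hθ1 hθτ hθ0 hθzero hθsimple
    (u (I1 i h2)) (u (I2 i h2)) (v (σ (I1 i h2))) (v (σ (I2 i h2)))
    (lam + (i : ℂ) * hbar) hbar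
  rw [show u (I2 i h2) - v (σ (I2 i h2)) - (lam + (i:ℂ) * hbar) - hbar
        = u (I2 i h2) - v (σ (I2 i h2)) - lam - ((i:ℂ)+1) * hbar by ring,
      show u (I2 i h2) - v (σ (I1 i h2)) - (lam + (i:ℂ) * hbar) - hbar
        = u (I2 i h2) - v (σ (I1 i h2)) - lam - ((i:ℂ)+1) * hbar by ring,
      show u (I1 i h2) - v (σ (I2 i h2)) - (lam + (i:ℂ) * hbar) - hbar
        = u (I1 i h2) - v (σ (I2 i h2)) - lam - ((i:ℂ)+1) * hbar by ring,
      show u (I1 i h2) - v (σ (I1 i h2)) - (lam + (i:ℂ) * hbar) - hbar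
        = u (I1 i h2) - v (σ (I1 i h2)) - lam - ((i:ℂ)+1) * hbar by ring,
      show u (I1 i h2) - v (σ (I1 i h2)) - (lam + (i:ℂ) * hbar)
        = u (I1 i h2) - v (σ (I1 i h2)) - lam - (i:ℂ) * hbar by ring,
      show u (I1 i h2) - v (σ (I2 i h2)) - (lam + (i:ℂ) * hbar)
        = u (I1 i h2) - v (σ (I2 i h2)) - lam - (i:ℂ) * hbar by ring,
      show u (I2 i h2) - v (σ (I1 i h2)) - (lam + (i:ℂ) * hbar)
        = u (I2 i h2) - v (σ (I1 i h2)) - lam - (i:ℂ) * hbar by ring,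
      show u (I2 i h2) - v (σ (I2 i h2)) - (lam + (i:ℂ) * hbar)
        = u (I2 i h2) - v (σ (I2 i h2)) - lam - (i:ℂ) * hbar by ring] at hE
  -- abbreviations
  set A := u (I1 i h2) with hA
  set B := u (I2 i h2) with hB
  set x := v (σ (I1 i h2)) with hx
  set y := v (σ (I2 i h2)) with hy
  set J0 := InvP θ hbar v σ with hJ0
  set J := InvP θ hbar v (σ * s) with hJ
  set L0 := LP θ u v σ with hL0
  set L1 := LP θ u v (σ * s) with hL1
  set L2 := LP θ (u ∘ s) v σ with hL2
  set L3 := LP θ (u ∘ s) v (σ * s) with hL3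
  set U0 := UP θ hbar u v σ with hU0
  set U1 := UP θ hbar u v (σ * s) with hU1
  set U2 := UP θ hbar (u ∘ s) v σ with hU2
  set U3 := UP θ hbar (u ∘ s) v (σ * s) with hU3
  set C := (∏ m ∈ (Finset.univ.erase (I1 i h2)).erase (I2 i h2),
      θ (u m - v (σ m) - lam - ((m : ℕ) : ℂ) * hbar) * θ hbar
        / θ (-lam - ((m : ℕ) : ℂ) * hbar)) with hC
  refine mul_right_cancel₀ (b := θ (A - y) * θ (B - y) * θ (B - x + hbar) * θ (A - x + hbar)
    * θ (y - x - hbar)) (by exact mul_ne_zero (mul_ne_zero (mul_ne_zero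
      (mul_ne_zero tay tby) tbxh) taxh) twm) ?_
  linear_combination
    (-(J0 * L0 * U0 * C * θ hbar * θ hbar / θ (-lam - (i:ℂ) * hbar)
        / θ (-lam - ((i:ℂ)+1) * hbar) * θ (B - y) * θ (A - x + hbar))) * hE
    + (E2 * (U2 * θ (B - x + hbar)) + L0 * θ (B - y) * E5) *
        (J0 * θ (B - y) * θ (A - x + hbar) * θ (y - x - hbar) *
          (θ (B - x - lam - (i:ℂ) * hbar) * θ hbar / θ (-lam - (i:ℂ) * hbar)) *
          (θ (A - y - lam - ((i:ℂ)+1) * hbar) * θ hbar / θ (-lam - ((i:ℂ)+1) * hbar)) * C)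
    + (E7' * (L3 * θ (A - y) * θ (B - y) * U3 * θ (A - x + hbar) * θ (B - x + hbar))
        + J0 * θ (y - x + hbar) *
          ((θ (A - y) * E3 + θ (B - x) * E2) * (U3 * θ (A - x + hbar) * θ (B - x + hbar))
            + L0 * θ (B - y) * θ (B - x) *
              (θ (B - x + hbar) * E6 + θ (A - y + hbar) * E5))) *
        ((θ (B - y - lam - (i:ℂ) * hbar) * θ hbar / θ (-lam - (i:ℂ) * hbar)) *
          (θ (A - x - lam - ((i:ℂ)+1) * hbar) * θ hbar / θ (-lam - ((i:ℂ)+1) * hbar)) * C)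
    - (E7' * (L1 * θ (A - y) * U1 * θ (B - x + hbar))
        + J0 * θ (y - x + hbar) * (E1 * (U1 * θ (B - x + hbar)) + L0 * θ (A - x) * E4)) *
        (θ (B - y) * θ (A - x + hbar) *
          (θ (A - y - lam - (i:ℂ) * hbar) * θ hbar / θ (-lam - (i:ℂ) * hbar)) *
          (θ (B - x - lam - ((i:ℂ)+1) * hbar) * θ hbar / θ (-lam - ((i:ℂ)+1) * hbar)) * C)


lemma uswap_generic (τ : ℂ) (hτ : 0 < τ.im) (hθdiff : Differentiable ℂ θ)
    (hθ1 : ∀ x : ℂ, θ (x + 1) = -θ x)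
    (hθτ : ∀ x : ℂ, θ (x + τ) =
      -Complex.exp (-(2 * (Real.pi : ℂ) * Complex.I * x) - (Real.pi : ℂ) * Complex.I * τ) * θ x)
    (hθ0 : deriv θ 0 = 1)
    (hθzero : ∀ x : ℂ, θ x = 0 ↔ x ∈ latticeGamma τ)
    (hθsimple : ∀ x ∈ latticeGamma τ, deriv θ x ≠ 0)
    (u v : Fin n → ℂ)
    (hv : ∀ a b : Fin n, a ≠ b →
      v a - v b ∉ latticeGamma τ ∧ v a - v b - hbar ∉ latticeGamma τ)
    (hu : ∀ j : Fin n, θ (u (I1 i h2) - v j) ≠ 0 ∧ θ (u (I1 i h2) - v j + hbar) ≠ 0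
        ∧ θ (u (I2 i h2) - v j) ≠ 0 ∧ θ (u (I2 i h2) - v j + hbar) ≠ 0) :
    Zexp θ hbar lam n (u ∘ Equiv.swap (I1 i h2) (I2 i h2)) v = Zexp θ hbar lam n u v := by
  classical
  set s := Equiv.swap (I1 i h2) (I2 i h2) with hs
  rw [Zexp_eq, Zexp_eq]
  congr 1
  rw [← sub_eq_zero, ← Finset.sum_sub_distrib]
  have hI12ne : (I1 i h2 : Fin n) ≠ I2 i h2 := by
    intro h; exact absurd (congrArg Fin.val h) (by simp)
  have hss : ∀ a : Equiv.Perm (Fin n), a * s * s = a := by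
    intro a; rw [mul_assoc, hs, Equiv.swap_mul_self, mul_one]
  apply Finset.sum_ninvolution (fun σ => σ * s)
  · intro σ
    have key : ∀ ρ : Equiv.Perm (Fin n), ρ (I1 i h2) < ρ (I2 i h2) →
        InvP θ hbar v ρ * LP θ (u ∘ s) v ρ * UP θ hbar (u ∘ s) v ρ
            * DP θ hbar lam (u ∘ s) v ρ
          + InvP θ hbar v (ρ * s) * LP θ (u ∘ s) v (ρ * s) * UP θ hbar (u ∘ s) v (ρ * s)
            * DP θ hbar lam (u ∘ s) v (ρ * s)
        = InvP θ hbar v ρ * LP θ u v ρ * UP θ hbar u v ρ * DP θ hbar lam u v ρ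
          + InvP θ hbar v (ρ * s) * LP θ u v (ρ * s) * UP θ hbar u v (ρ * s)
            * DP θ hbar lam u v (ρ * s) :=
      fun ρ hρ => uswap_key θ hbar lam h2 τ hτ hθdiff hθ1 hθτ hθ0 hθzero hθsimple
        u v hv hu ρ hρ
    have htri : σ (I1 i h2) ≠ σ (I2 i h2) := fun h => hI12ne (σ.injective h)
    rcases lt_or_gt_of_ne htri with hσ | hσ
    · have := key σ hσ
      linear_combination this
    · have hσ' : (σ * s) (I1 i h2) < (σ * s) (I2 i h2) := by
        rw [Equiv.Perm.mul_apply, Equiv.Perm.mul_apply, hs, Equiv.swap_apply_left,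
          Equiv.swap_apply_right]
        exact hσ
      have := key (σ * s) hσ'
      rw [hss σ] at this
      linear_combination this
  · intro σ _ heq
    have := congrArg (fun π : Equiv.Perm (Fin n) => π (I1 i h2)) heq
    simp only [Equiv.Perm.mul_apply] at this
    rw [hs, Equiv.swap_apply_left] at this
    exact hI12ne (σ.injective this).symm
  · intro σ; exact Finset.mem_univ _
  · exact hss


lemma Zexp_cont_u (hθdiff : Differentiable ℂ θ) (v : Fin n → ℂ) (w : ℂ → Fin n → ℂ)
    (hw : ∀ k, Continuous fun t => w t k) :
    Continuous (fun t => Zexp θ hbar lam n (w t) v) := by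
  simp only [Zexp]
  apply Continuous.mul continuous_const
  apply continuous_finset_sum
  intro σ _
  apply Continuous.mul
  apply Continuous.mul
  apply Continuous.mul
  · exact continuous_const
  · apply continuous_finset_prod
    intro k _
    apply continuous_finset_prod
    intro m _
    by_cases hkm : k < m
    · simp only [if_pos hkm]
      exact hθdiff.continuous.comp ((hw k).sub continuous_const)
    · simp only [if_neg hkm]
      exact continuous_const
  · apply continuous_finset_prod
    intro k _
    apply continuous_finset_prod
    intro m _
    by_cases hkm : m < k
    · simp only [if_pos hkm]
      exact hθdiff.continuous.comp (((hw k).sub continuous_const).add continuous_const)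
    · simp only [if_neg hkm]
      exact continuous_const
  · apply continuous_finset_prod
    intro m _
    apply Continuous.div_const
    apply Continuous.mul _ continuous_const
    exact hθdiff.continuous.comp ((((hw m).sub continuous_const).sub continuous_const).sub
      continuous_const)

lemma uswap (τ : ℂ) (hτ : 0 < τ.im) (hθdiff : Differentiable ℂ θ)
    (hθ1 : ∀ x : ℂ, θ (x + 1) = -θ x)
    (hθτ : ∀ x : ℂ, θ (x + τ) =
      -Complex.exp (-(2 * (Real.pi : ℂ) * Complex.I * x) - (Real.pi : ℂ) * Complex.I * τ) * θ x)
    (hθ0 : deriv θ 0 = 1)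
    (hθzero : ∀ x : ℂ, θ x = 0 ↔ x ∈ latticeGamma τ)
    (hθsimple : ∀ x ∈ latticeGamma τ, deriv θ x ≠ 0)
    (u v : Fin n → ℂ)
    (hv : ∀ a b : Fin n, a ≠ b →
      v a - v b ∉ latticeGamma τ ∧ v a - v b - hbar ∉ latticeGamma τ) :
    Zexp θ hbar lam n (u ∘ Equiv.swap (I1 i h2) (I2 i h2)) v = Zexp θ hbar lam n u v := by
  classical
  set s := Equiv.swap (I1 i h2) (I2 i h2) with hs
  have hI12ne : (I1 i h2 : Fin n) ≠ I2 i h2 := by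
    intro h; exact absurd (congrArg Fin.val h) (by simp)
  set Sbad : Set ℂ := ⋃ j : Fin n, (((fun g => v j + g) '' (latticeGamma τ)) ∪
    ((fun g => v j - hbar + g) '' (latticeGamma τ))) with hSbad
  have hSbadc : Sbad.Countable := by
    apply Set.countable_iUnion
    intro j
    exact (gamma_countable.image _).union (gamma_countable.image _)
  have hSb : ∀ t : ℂ, t ∉ Sbad → ∀ j : Fin n,
      θ (t - v j) ≠ 0 ∧ θ (t - v j + hbar) ≠ 0 := by
    intro t ht j
    constructor
    · intro h0
      apply ht
      apply Set.mem_iUnion.mpr ⟨j, Or.inl ⟨t - v j, (hθzero _).mp h0, by ring⟩⟩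
    · intro h0
      apply ht
      apply Set.mem_iUnion.mpr ⟨j, Or.inr ⟨t - v j + hbar, (hθzero _).mp h0, by ring⟩⟩
  -- coordinate continuity
  have hwcont : ∀ (d : ℂ) (k : Fin n),
      Continuous fun c => Function.update (Function.update u (I1 i h2) c) (I2 i h2) d k := by
    intro d k
    by_cases hk2 : k = I2 i h2
    · simp only [Function.update_apply, if_pos hk2]
      exact continuous_const
    · simp only [Function.update_apply, if_neg hk2]
      by_cases hk1 : k = I1 i h2
      · simp only [if_pos hk1]; exact continuous_id
      · simp only [if_neg hk1]; exact continuous_const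
  have hwcont2 : ∀ (c : ℂ) (k : Fin n),
      Continuous fun d => Function.update (Function.update u (I1 i h2) c) (I2 i h2) d k := by
    intro c k
    by_cases hk2 : k = I2 i h2
    · simp only [Function.update_apply, if_pos hk2]
      exact continuous_id
    · simp only [Function.update_apply, if_neg hk2]
      exact continuous_const
  -- step 1: generic case
  have hgen : ∀ c d : ℂ, c ∉ Sbad → d ∉ Sbad →
      Zexp θ hbar lam n ((Function.update (Function.update u (I1 i h2) c) (I2 i h2) d) ∘ s) v
        = Zexp θ hbar lam n (Function.update (Function.update u (I1 i h2) c) (I2 i h2) d) v := by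
    intro c d hc hd
    apply uswap_generic θ hbar lam h2 τ hτ hθdiff hθ1 hθτ hθ0 hθzero hθsimple _ v hv
    intro j
    have e1 : Function.update (Function.update u (I1 i h2) c) (I2 i h2) d (I1 i h2) = c := by
      rw [Function.update_of_ne hI12ne, Function.update_self]
    have e2 : Function.update (Function.update u (I1 i h2) c) (I2 i h2) d (I2 i h2) = d := by
      rw [Function.update_self]
    rw [e1, e2]
    exact ⟨(hSb c hc j).1, (hSb c hc j).2, (hSb d hd j).1, (hSb d hd j).2⟩
  -- step 2: extend in d
  have hstep2 : ∀ c : ℂ, c ∉ Sbad → ∀ d : ℂ,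
      Zexp θ hbar lam n ((Function.update (Function.update u (I1 i h2) c) (I2 i h2) d) ∘ s) v
        = Zexp θ hbar lam n (Function.update (Function.update u (I1 i h2) c) (I2 i h2) d) v := by
    intro c hc
    apply ext_countable ?_ ?_ hSbadc (fun d hd => hgen c d hc hd)
    · exact Zexp_cont_u θ hbar lam hθdiff v _ (fun k => hwcont2 c (s k))
    · exact Zexp_cont_u θ hbar lam hθdiff v _ (fun k => hwcont2 c k)
  -- step 3: extend in c
  have hstep3 : ∀ d c : ℂ,
      Zexp θ hbar lam n ((Function.update (Function.update u (I1 i h2) c) (I2 i h2) d) ∘ s) v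
        = Zexp θ hbar lam n (Function.update (Function.update u (I1 i h2) c) (I2 i h2) d) v := by
    intro d
    apply ext_countable ?_ ?_ hSbadc (fun c hc => hstep2 c hc d)
    · exact Zexp_cont_u θ hbar lam hθdiff v _ (fun k => hwcont d (s k))
    · exact Zexp_cont_u θ hbar lam hθdiff v _ (fun k => hwcont d k)
  have hu : Function.update (Function.update u (I1 i h2) (u (I1 i h2))) (I2 i h2)
      (u (I2 i h2)) = u := by
    rw [Function.update_eq_self, Function.update_eq_self]
  have := hstep3 (u (I2 i h2)) (u (I1 i h2))
  rwa [hu] at this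

end USwap

end ZAux


/-- the explicit elliptic weight-function expression `Z^(n)` is symmetric
in both sets of variables. -/
theorem Zexp_symmetric
    (τ : ℂ) (hτ : 0 < τ.im)
    (θ : ℂ → ℂ) (hθdiff : Differentiable ℂ θ)
    (hθ1 : ∀ x : ℂ, θ (x + 1) = -θ x)
    (hθτ : ∀ x : ℂ, θ (x + τ) =
      -Complex.exp (-(2 * (Real.pi : ℂ) * Complex.I * x) - (Real.pi : ℂ) * Complex.I * τ) * θ x)
    (hθ0 : deriv θ 0 = 1)
    (hθzero : ∀ x : ℂ, θ x = 0 ↔ x ∈ latticeGamma τ)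
    (hθsimple : ∀ x ∈ latticeGamma τ, deriv θ x ≠ 0)
    (hbar lam : ℂ) (hbar_nl : hbar ∉ latticeGamma τ)
    (hlam : ∀ k : ℤ, lam + (k : ℂ) * hbar ∉ latticeGamma τ)
    (n : ℕ) (hn : 1 ≤ n) (π : Equiv.Perm (Fin n)) (u v : Fin n → ℂ)
    (hv : ∀ i j : Fin n, i ≠ j →
      v i - v j ∉ latticeGamma τ ∧ v i - v j - hbar ∉ latticeGamma τ) :
    Zexp θ hbar lam n (u ∘ π) v = Zexp θ hbar lam n u v ∧
    Zexp θ hbar lam n u (v ∘ π) = Zexp θ hbar lam n u v := by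
  classical
  set P : Equiv.Perm (Fin n) → Prop := fun π => ∀ u v : Fin n → ℂ,
    (∀ i j : Fin n, i ≠ j →
      v i - v j ∉ latticeGamma τ ∧ v i - v j - hbar ∉ latticeGamma τ) →
    Zexp θ hbar lam n (u ∘ π) v = Zexp θ hbar lam n u v ∧
    Zexp θ hbar lam n u (v ∘ π) = Zexp θ hbar lam n u v with hP
  have hP1 : P 1 := by
    intro u v _
    have h1 : u ∘ (1 : Equiv.Perm (Fin n)) = u := rfl
    have h2 : v ∘ (1 : Equiv.Perm (Fin n)) = v := rfl
    rw [h1, h2]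
    exact ⟨rfl, rfl⟩
  have hPmul : ∀ π ρ : Equiv.Perm (Fin n), P π → P ρ → P (π * ρ) := by
    intro π ρ hπ hρ u v hv'
    have hcu : u ∘ (π * ρ) = (u ∘ π) ∘ ρ := by
      funext k; simp [Equiv.Perm.mul_apply]
    have hcv : v ∘ (π * ρ) = (v ∘ π) ∘ ρ := by
      funext k; simp [Equiv.Perm.mul_apply]
    have hv'' : ∀ i j : Fin n, i ≠ j →
        (v ∘ π) i - (v ∘ π) j ∉ latticeGamma τ ∧
        (v ∘ π) i - (v ∘ π) j - hbar ∉ latticeGamma τ := by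
      intro i j hij
      exact hv' (π i) (π j) (fun h => hij (π.injective h))
    constructor
    · rw [hcu, (hρ (u ∘ π) v hv').1, (hπ u v hv').1]
    · rw [hcv, (hρ u (v ∘ π) hv'').2, (hπ u v hv').2]
  have hPadj : ∀ (i : ℕ) (h2 : i + 1 < n), P (Equiv.swap (ZAux.I1 i h2) (ZAux.I2 i h2)) := by
    intro i h2 u' v' hv'
    constructor
    · exact ZAux.uswap θ hbar lam h2 τ hτ hθdiff hθ1 hθτ hθ0 hθzero hθsimple u' v' hv'
    · exact ZAux.vswap θ hbar h2 τ hτ hθdiff hθ1 hθτ hθ0 hθzero hθsimple lam u' v' hv'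
  have hPswap : ∀ x y : Fin n, x ≠ y → P (Equiv.swap x y) := by
    have main : ∀ d : ℕ, ∀ x y : Fin n, x < y → y.val = x.val + d → P (Equiv.swap x y) := by
      intro d
      induction d using Nat.strong_induction_on with
      | _ d ih =>
        intro x y hxy hd
        rcases Nat.lt_or_ge d 2 with hd2 | hd2
        · interval_cases d
          · exfalso; rw [Fin.lt_def] at hxy; omega
          · -- adjacent
            have h2 : x.val + 1 < n := by rw [← hd]; exact y.isLt
            have ex : x = ZAux.I1 x.val h2 := Fin.ext rfl
            have ey : y = ZAux.I2 x.val h2 := Fin.ext hd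
            rw [ex, ey]
            exact hPadj x.val h2
        · have hmlt : x.val + 1 < n := by have := y.isLt; omega
          set m : Fin n := ⟨x.val + 1, hmlt⟩ with hm
          have hxm : x ≠ m := by
            intro h; exact absurd (congrArg Fin.val h) (by simp [hm])
          have hmy : m < y := by rw [Fin.lt_def]; simp [hm]; omega
          have hswap : Equiv.swap m y * Equiv.swap x m * Equiv.swap m y
              = Equiv.swap y x := Equiv.swap_mul_swap_mul_swap hxm (ne_of_lt hxy)
          have hPm : P (Equiv.swap x m) := by
            have ex : x = ZAux.I1 x.val hmlt := Fin.ext rfl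
            have em : m = ZAux.I2 x.val hmlt := Fin.ext rfl
            rw [ex, em]
            exact hPadj x.val hmlt
          have hPmy : P (Equiv.swap m y) := by
            apply ih (d - 1) (by omega) m y hmy
            simp [hm]; omega
          have : P (Equiv.swap y x) := by
            rw [← hswap]
            exact hPmul _ _ (hPmul _ _ hPmy hPm) hPmy
          rwa [Equiv.swap_comm] at this
    intro x y hxy
    rcases lt_or_gt_of_ne hxy with h | h
    · exact main (y.val - x.val) x y h (by omega)
    · rw [Equiv.swap_comm]
      exact main (x.val - y.val) y x h (by omega)
  have hPall : ∀ π : Equiv.Perm (Fin n), P π := by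
    intro π
    refine Equiv.Perm.swap_induction_on π hP1 ?_
    intro f x y hxy hPf
    exact hPmul _ _ (hPswap x y hxy) hPf
  exact hPall π u v hv


end
end
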